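/- arXiv:2512.10177 — 6 statements merged into one kernel-verified Lean document; each statement's English description precedes it below -/
import Mathlib

section
/- Let G be a finite simple graph and k ∈ ℕ. If K is a clique of order at least 3 in B_k(G) and there exists a vertex a ∈ V(G) such that P − a = P' − a for all P, P' ∈ K (i.e., every edge of K is realized by a), then such a vertex a is unique. -/
open SimpleGraph

variable {V : Type*} [Fintype V] [DecidableEq V]

/-- Delete the vertex `v` from its part: `P − v`. -/
def eraseVtx (P : Multiset (Finset V)) (v : V) : Multiset (Finset V) :=
  P.map (fun s => s.erase v)

/-- A stable `k`-partition of `G`: a multiset of exactly `k` independent sets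
(empty parts allowed) that are pairwise disjoint and whose union is `V(G)`.
(Pairwise disjointness together with covering is encoded by requiring that the
multiset sum of the parts is exactly the multiset of all vertices.) -/
def IsStablePartition (G : SimpleGraph V) (k : ℕ) (P : Multiset (Finset V)) : Prop :=
  Multiset.card P = k ∧ (P.map Finset.val).sum = (Finset.univ : Finset V).val ∧
    ∀ s ∈ P, ∀ a ∈ s, ∀ b ∈ s, ¬ G.Adj a b

/-- The Bell `k`-coloring graph of `G`. -/
def bellGraph (G : SimpleGraph V) (k : ℕ) :
    SimpleGraph {P : Multiset (Finset V) // IsStablePartition G k P} where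
  Adj P Q := P ≠ Q ∧ ∃ v : V, eraseVtx P.1 v = eraseVtx Q.1 v
  symm := by
    constructor
    rintro P Q ⟨hne, v, hv⟩
    exact ⟨hne.symm, v, hv.symm⟩
  loopless := by
    constructor
    rintro P ⟨hne, _⟩
    exact hne rfl

section PartContaining

variable {α : Type*} [DecidableEq α]

theorem Finset.eq_of_erase_eq_of_mem_iff {s t : Finset α} {a : α}
    (h : s.erase a = t.erase a) (ha : a ∈ s ↔ a ∈ t) : s = t := by
  ext x
  by_cases hx : x = a
  · rwa [hx]
  · simpa [hx] using Finset.ext_iff.mp h x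

-- `X.filter (v ∈ ·) = {s}` says that `s` is the unique part of `X` containing `v`, counted
-- with multiplicity.
theorem exists_filter_mem_eq_singleton [Fintype α] {X : Multiset (Finset α)}
    (hX : (X.map Finset.val).sum = Finset.univ.val) (v : α) :
    ∃ s, X.filter (v ∈ ·) = {s} := by
  have hcount : (X.map Finset.val).sum.count v = 1 := by
    rw [hX]
    exact Multiset.count_eq_one_of_mem Finset.univ.nodup (Finset.mem_univ v)
  have hsum : ∀ Y : Multiset (Finset α),
      (Y.map fun s => s.val.count v).sum = (Y.filter (v ∈ ·)).card := by
    intro Y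
    induction Y using Multiset.induction with
    | empty => simp
    | cons s Y ih =>
      by_cases hv : v ∈ s <;> simp [hv, ih, Multiset.count_eq_one_of_mem s.nodup, add_comm]
  rw [Multiset.count_sum, hsum] at hcount
  exact Multiset.card_eq_one.mp hcount

theorem eraseVtx_eq_cons {X : Multiset (Finset α)} {v : α} {s : Finset α}
    (hX : X.filter (v ∈ ·) = {s}) :
    eraseVtx X v = s.erase v ::ₘ X.filter (fun t => v ∉ t) := by
  conv_lhs => rw [← Multiset.filter_add_not (v ∈ ·) X]
  rw [eraseVtx, Multiset.map_add, hX, Multiset.map_singleton, Multiset.singleton_add,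
    Multiset.map_congr rfl fun t ht => Finset.erase_eq_of_notMem (Multiset.mem_filter.mp ht).2,
    Multiset.map_id']

theorem eq_of_eraseVtx_eq {X Y : Multiset (Finset α)} {v : α} {s : Finset α}
    (hX : X.filter (v ∈ ·) = {s}) (hY : Y.filter (v ∈ ·) = {s})
    (h : eraseVtx X v = eraseVtx Y v) : X = Y := by
  rw [eraseVtx_eq_cons hX, eraseVtx_eq_cons hY, Multiset.cons_inj_right] at h
  rw [← Multiset.filter_add_not (v ∈ ·) X, ← Multiset.filter_add_not (v ∈ ·) Y, hX, hY, h]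

theorem filter_mem_eraseVtx {a b : α} (hab : a ≠ b) (X : Multiset (Finset α)) :
    (eraseVtx X b).filter (a ∈ ·) = (X.filter (a ∈ ·)).map (·.erase b) := by
  rw [eraseVtx, Multiset.filter_map]
  congr 1
  exact Multiset.filter_congr fun s _ => by simp [hab]

theorem erase_eq_of_eraseVtx_eq {X Y : Multiset (Finset α)} {a b : α} (hab : a ≠ b)
    {s t : Finset α} (hX : X.filter (a ∈ ·) = {s}) (hY : Y.filter (a ∈ ·) = {t})
    (h : eraseVtx X b = eraseVtx Y b) : s.erase b = t.erase b := by
  have h' := congrArg (Multiset.filter (a ∈ ·)) h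
  rwa [filter_mem_eraseVtx hab, filter_mem_eraseVtx hab, hX, hY, Multiset.map_singleton,
    Multiset.map_singleton, Multiset.singleton_inj] at h'

end PartContaining

theorem anchor_uniqueness_general (G : SimpleGraph V) (k : ℕ)
    (K : Finset {P : Multiset (Finset V) // IsStablePartition G k P})
    (hcard : 3 ≤ K.card)
    (a b : V)
    (ha : ∀ P ∈ K, ∀ Q ∈ K, eraseVtx P.1 a = eraseVtx Q.1 a)
    (hb : ∀ P ∈ K, ∀ Q ∈ K, eraseVtx P.1 b = eraseVtx Q.1 b) :
    a = b := by
  by_contra hab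
  choose part hpart using
    fun P : {P // IsStablePartition G k P} => exists_filter_mem_eq_singleton P.2.2.1 a
  -- With `P − a` and `P − b` fixed, `P` is determined by whether `b` shares the part of `a`.
  have hinj : Set.InjOn (fun P => b ∈ part P) K := by
    intro P hP Q hQ hbPQ
    have hparts : part P = part Q := Finset.eq_of_erase_eq_of_mem_iff
      (erase_eq_of_eraseVtx_eq hab (hpart P) (hpart Q) (hb P hP Q hQ)) (iff_of_eq hbPQ)
    exact Subtype.ext (eq_of_eraseVtx_eq (hpart P) (hparts ▸ hpart Q) (ha P hP Q hQ))
  have hle := Finset.card_le_card_of_injOn _ (fun _ _ => Finset.mem_coe.mpr (Finset.mem_univ _))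
    hinj
  rw [Finset.card_univ, Fintype.card_prop] at hle
  omega

/-- **Anchor uniqueness.** If `K` is a clique of order at least 3 in the Bell
`k`-coloring graph of `G` and every edge of `K` is realized by `a` and also by
`b`, then `a = b`. -/
theorem anchor_uniqueness (G : SimpleGraph V) (k : ℕ)
    (K : Finset {P : Multiset (Finset V) // IsStablePartition G k P})
    (hclique : (bellGraph G k).IsClique (K : Set _)) (hcard : 3 ≤ K.card)
    (a b : V)
    (ha : ∀ P ∈ K, ∀ Q ∈ K, eraseVtx P.1 a = eraseVtx Q.1 a)
    (hb : ∀ P ∈ K, ∀ Q ∈ K, eraseVtx P.1 b = eraseVtx Q.1 b) :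
    a = b :=
  anchor_uniqueness_general G k K hcard a b ha hb
end

section
/- Let G be a finite simple graph, k ∈ ℕ, and let {P_1, P_2, P_3} be a triangle in B_k(G). For 1 ≤ i < j ≤ 3 set V_{ij} = {v ∈ V(G) : P_i ∼_v P_j}. Then exactly one of the following holds: (1) V_{12} ∩ V_{23} ∩ V_{31} ≠ ∅, in which case the triangle is an S-clique; or (2) the sets V_{12}, V_{23}, V_{31} are pairwise disjoint singletons, in which case the triangle is a T-clique. -/
open SimpleGraph

variable {V : Type*} [Fintype V] [DecidableEq V]

/-- The set of vertices realizing a (potential) edge between two partitions. -/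
def realizers (P Q : Multiset (Finset V)) : Set V :=
  {v : V | eraseVtx P v = eraseVtx Q v}

/-!
A stable partition with a prescribed number of parts is determined by the relation "lie in the
same part": this relation fixes the nonempty parts, and the number of parts fixes how many empty
ones there are. If `P − x = Q − x`, then `P` and `Q` induce the same relation on pairs avoiding
`x`. Hence if two distinct vertices `v, w` both realize an edge `PQ` of `B_k(G)`, the relations of
`P` and `Q` can differ only on the pair `{v, w}`, and as `P ≠ Q` they do differ there.

In a triangle `PQR` a vertex realizing two of the edges realizes the third, so if no vertex
realizes all three edges the three realizer sets are pairwise disjoint. Then realizers `x` of `QR`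
and `y` of `RP` avoid `v` and `w`, and transport the relation on `{v, w}` from `P` to `R` to `Q`:
a contradiction, so each realizer set is a singleton.
-/

open Multiset

section Partitions

variable {α : Type*}

def SamePart (P : Multiset (Finset α)) (a b : α) : Prop :=
  ∃ s ∈ P, a ∈ s ∧ b ∈ s

theorem SamePart.symm {P : Multiset (Finset α)} {a b : α} (h : SamePart P a b) :
    SamePart P b a :=
  let ⟨s, hs, ha, hb⟩ := h; ⟨s, hs, hb, ha⟩

theorem samePart_comm {P : Multiset (Finset α)} {a b : α} : SamePart P a b ↔ SamePart P b a :=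
  ⟨SamePart.symm, SamePart.symm⟩

def IsPartition [Fintype α] (P : Multiset (Finset α)) : Prop :=
  (P.map Finset.val).sum = Finset.univ.val

theorem IsStablePartition.isPartition [Fintype α] {G : SimpleGraph α} {k : ℕ}
    {P : Multiset (Finset α)} (hP : IsStablePartition G k P) : IsPartition P :=
  hP.2.1

variable [DecidableEq α]

section Realizers

variable {P Q : Multiset (Finset α)} {a b x : α}

theorem mem_realizers : x ∈ realizers P Q ↔ eraseVtx P x = eraseVtx Q x :=
  Iff.rfl

theorem realizers_inter_realizers (P Q R : Multiset (Finset α)) :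
    realizers P Q ∩ realizers Q R = realizers P Q ∩ realizers Q R ∩ realizers R P :=
  (Set.inter_eq_left.2 fun _ h => (h.1.trans h.2).symm).symm

theorem disjoint_realizers_iff_inter_eq_empty (P Q R : Multiset (Finset α)) :
    Disjoint (realizers P Q) (realizers Q R) ∧ Disjoint (realizers Q R) (realizers R P) ∧
        Disjoint (realizers P Q) (realizers R P) ↔
      realizers P Q ∩ realizers Q R ∩ realizers R P = ∅ := by
  have hQR_RP : realizers Q R ∩ realizers R P =
      realizers P Q ∩ realizers Q R ∩ realizers R P := by
    rw [realizers_inter_realizers]; ac_rfl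
  have hPQ_RP : realizers P Q ∩ realizers R P =
      realizers P Q ∩ realizers Q R ∩ realizers R P := by
    rw [Set.inter_comm, realizers_inter_realizers]; ac_rfl
  rw [Set.disjoint_iff_inter_eq_empty, Set.disjoint_iff_inter_eq_empty,
    Set.disjoint_iff_inter_eq_empty, hQR_RP, hPQ_RP, ← realizers_inter_realizers, and_self,
    and_self]

theorem inter_realizers_nonempty_iff (P Q R : Multiset (Finset α)) :
    (realizers P Q ∩ realizers Q R ∩ realizers R P).Nonempty ↔
      ∃ u, eraseVtx P u = eraseVtx Q u ∧ eraseVtx Q u = eraseVtx R u ∧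
        eraseVtx R u = eraseVtx P u :=
  ⟨fun ⟨u, ⟨h₁, h₂⟩, h₃⟩ => ⟨u, h₁, h₂, h₃⟩, fun ⟨u, h₁, h₂, h₃⟩ => ⟨u, ⟨h₁, h₂⟩, h₃⟩⟩

theorem samePart_eraseVtx_iff (hxa : x ≠ a) (hxb : x ≠ b) :
    SamePart (eraseVtx P x) a b ↔ SamePart P a b := by
  constructor
  · rintro ⟨t, ht, hat, hbt⟩
    obtain ⟨s, hs, rfl⟩ := mem_map.1 ht
    exact ⟨s, hs, Finset.mem_of_mem_erase hat, Finset.mem_of_mem_erase hbt⟩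
  · rintro ⟨s, hs, has, hbs⟩
    exact ⟨s.erase x, mem_map_of_mem _ hs, Finset.mem_erase.2 ⟨hxa.symm, has⟩,
      Finset.mem_erase.2 ⟨hxb.symm, hbs⟩⟩

theorem samePart_iff_of_mem_realizers (hx : x ∈ realizers P Q) (hxa : x ≠ a) (hxb : x ≠ b) :
    SamePart P a b ↔ SamePart Q a b := by
  rw [← samePart_eraseVtx_iff hxa hxb, mem_realizers.1 hx, samePart_eraseVtx_iff hxa hxb]

end Realizers

theorem count_sum_map_val (P : Multiset (Finset α)) (a : α) :
    count a (P.map Finset.val).sum = P.countP (a ∈ ·) := by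
  induction P using Multiset.induction_on with
  | empty => simp
  | cons s P ih =>
    by_cases h : a ∈ s
    · simp [ih, h, count_eq_one_of_mem s.nodup h, add_comm]
    · simp [ih, h]

namespace IsPartition

variable [Fintype α] {P Q : Multiset (Finset α)} {a : α} {s t : Finset α}

theorem exists_filter_mem_eq_singleton (hP : IsPartition P) (a : α) :
    ∃ u, P.filter (a ∈ ·) = {u} := by
  rw [← card_eq_one, ← countP_eq_card_filter, ← count_sum_map_val, hP, count_univ]

theorem exists_mem (hP : IsPartition P) (a : α) : ∃ s ∈ P, a ∈ s := by
  obtain ⟨u, hu⟩ := hP.exists_filter_mem_eq_singleton a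
  exact ⟨u, mem_filter.1 (hu ▸ mem_singleton_self u)⟩

theorem eq_of_mem_of_mem (hP : IsPartition P) (hs : s ∈ P) (ht : t ∈ P) (has : a ∈ s)
    (hat : a ∈ t) : s = t := by
  obtain ⟨u, hu⟩ := hP.exists_filter_mem_eq_singleton a
  have hsu : s ∈ P.filter (a ∈ ·) := mem_filter.2 ⟨hs, has⟩
  have htu : t ∈ P.filter (a ∈ ·) := mem_filter.2 ⟨ht, hat⟩
  rw [hu, mem_singleton] at hsu htu
  rw [hsu, htu]

theorem count_eq_one (hP : IsPartition P) (hs : s ∈ P) (ha : a ∈ s) : count s P = 1 := by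
  obtain ⟨u, hu⟩ := hP.exists_filter_mem_eq_singleton a
  refine le_antisymm ?_ (count_pos.2 hs)
  calc count s P = count s (P.filter (a ∈ ·)) := by rw [count_filter, if_pos ha]
    _ ≤ 1 := hu ▸ (count_le_card _ _).trans_eq (card_singleton u)

theorem mem_iff (hP : IsPartition P) (hs : s.Nonempty) :
    s ∈ P ↔ ∃ a ∈ s, ∀ b, SamePart P a b ↔ b ∈ s := by
  constructor
  · intro hsP
    obtain ⟨a, ha⟩ := hs
    refine ⟨a, ha, fun b => ⟨?_, fun hb => ⟨s, hsP, ha, hb⟩⟩⟩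
    rintro ⟨t, ht, hat, hbt⟩
    rwa [hP.eq_of_mem_of_mem ht hsP hat ha] at hbt
  · rintro ⟨a, ha, hs⟩
    obtain ⟨t, ht, hat⟩ := hP.exists_mem a
    convert ht using 1
    ext b
    rw [← hs b]
    refine ⟨?_, fun hbt => ⟨t, ht, hat, hbt⟩⟩
    rintro ⟨t', ht', hat', hbt'⟩
    rwa [hP.eq_of_mem_of_mem ht' ht hat' hat] at hbt'

theorem ext (hP : IsPartition P) (hQ : IsPartition Q) (hcard : card P = card Q)
    (h : SamePart P = SamePart Q) : P = Q := by
  have hcount : ∀ s : Finset α, s ≠ ∅ → count s P = count s Q := by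
    intro s hs
    have hs' := Finset.nonempty_iff_ne_empty.2 hs
    have hmem : s ∈ P ↔ s ∈ Q := by rw [hP.mem_iff hs', hQ.mem_iff hs', h]
    obtain ⟨a, ha⟩ := hs'
    by_cases hsP : s ∈ P
    · rw [hP.count_eq_one hsP ha, hQ.count_eq_one (hmem.1 hsP) ha]
    · rw [count_eq_zero.2 hsP, count_eq_zero.2 (hmem.not.1 hsP)]
  have hnonempty : P.filter (fun s => ¬∅ = s) = Q.filter (fun s => ¬∅ = s) := by
    refine Multiset.ext.2 fun s => ?_
    rw [count_filter, count_filter]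
    split_ifs with hs
    exacts [rfl, hcount s (Ne.symm hs)]
  have hempty : count ∅ P = count ∅ Q := by
    have hP' := card_eq_countP_add_countP (Eq ∅) P
    have hQ' := card_eq_countP_add_countP (Eq ∅) Q
    rw [countP_eq_card_filter (fun s => ¬∅ = s), hnonempty, ← countP_eq_card_filter] at hP'
    change card P = count ∅ P + _ at hP'
    change card Q = count ∅ Q + _ at hQ'
    omega
  ext s
  by_cases hs : s = ∅
  · rw [hs, hempty]
  · exact hcount s hs

end IsPartition

variable [Fintype α] {P Q R : Multiset (Finset α)}

theorem not_samePart_iff_of_mem_realizers (hP : IsPartition P) (hQ : IsPartition Q)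
    (hcard : card P = card Q) (hPQ : P ≠ Q) {v w : α} (hvw : v ≠ w) (hv : v ∈ realizers P Q)
    (hw : w ∈ realizers P Q) : ¬(SamePart P v w ↔ SamePart Q v w) := by
  intro hvw_iff
  refine hPQ (hP.ext hQ hcard (funext₂ fun a b => propext ?_))
  by_cases hv' : v ≠ a ∧ v ≠ b
  · exact samePart_iff_of_mem_realizers hv hv'.1 hv'.2
  by_cases hw' : w ≠ a ∧ w ≠ b
  · exact samePart_iff_of_mem_realizers hw hw'.1 hw'.2
  rw [not_and_or, not_ne_iff, not_ne_iff] at hv' hw'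
  rcases hv' with rfl | rfl <;> rcases hw' with rfl | rfl
  · exact absurd rfl hvw
  · exact hvw_iff
  · rwa [samePart_comm, samePart_comm (P := Q)]
  · exact absurd rfl hvw

theorem realizers_eq_singleton_of_disjoint (hP : IsPartition P) (hQ : IsPartition Q)
    (hcard : card P = card Q) (hPQ : P ≠ Q) (hQR : (realizers Q R).Nonempty)
    (hRP : (realizers R P).Nonempty) (hPQ_QR : Disjoint (realizers P Q) (realizers Q R))
    (hPQ_RP : Disjoint (realizers P Q) (realizers R P)) {v : α} (hv : v ∈ realizers P Q) :
    realizers P Q = {v} := by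
  refine Set.eq_singleton_iff_unique_mem.2 ⟨hv, fun w hw => ?_⟩
  by_contra hwv
  obtain ⟨x, hx⟩ := hQR
  obtain ⟨y, hy⟩ := hRP
  have hxv : x ≠ v := by rintro rfl; exact Set.disjoint_left.1 hPQ_QR hv hx
  have hxw : x ≠ w := by rintro rfl; exact Set.disjoint_left.1 hPQ_QR hw hx
  have hyv : y ≠ v := by rintro rfl; exact Set.disjoint_left.1 hPQ_RP hv hy
  have hyw : y ≠ w := by rintro rfl; exact Set.disjoint_left.1 hPQ_RP hw hy
  exact not_samePart_iff_of_mem_realizers hP hQ hcard hPQ (Ne.symm hwv) hv hw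
    ((samePart_iff_of_mem_realizers hx hxv hxw).trans
      (samePart_iff_of_mem_realizers hy hyv hyw)).symm

end Partitions

section BellGraph

variable {G : SimpleGraph V} {k : ℕ} {P Q R : {P : Multiset (Finset V) // IsStablePartition G k P}}

theorem exists_realizers_eq_singleton_of_disjoint (hPQ : (bellGraph G k).Adj P Q)
    (hQR : (bellGraph G k).Adj Q R) (hRP : (bellGraph G k).Adj R P)
    (hPQ_QR : Disjoint (realizers P.1 Q.1) (realizers Q.1 R.1))
    (hPQ_RP : Disjoint (realizers P.1 Q.1) (realizers R.1 P.1)) :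
    ∃ v, realizers P.1 Q.1 = {v} :=
  let ⟨hne, v, hv⟩ := hPQ
  ⟨v, realizers_eq_singleton_of_disjoint P.2.isPartition Q.2.isPartition (P.2.1.trans Q.2.1.symm)
    (Subtype.coe_injective.ne hne) hQR.2 hRP.2 hPQ_QR hPQ_RP hv⟩

end BellGraph

/-- **Triangle realizers.** For a triangle `{P₁, P₂, P₃}` in `B_k(G)` with
`V_{ij}` the set of vertices realizing the edge `P_iP_j`, exactly one of the
following holds: (1) `V₁₂ ∩ V₂₃ ∩ V₃₁ ≠ ∅`, in which case the triangle is an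
S-clique (it has a common anchor); or (2) the sets `V₁₂, V₂₃, V₃₁` are pairwise
disjoint singletons, in which case the triangle is a T-clique (no anchor). -/
theorem triangle_realizers (G : SimpleGraph V) (k : ℕ)
    (P₁ P₂ P₃ : {P : Multiset (Finset V) // IsStablePartition G k P})
    (h12 : (bellGraph G k).Adj P₁ P₂) (h23 : (bellGraph G k).Adj P₂ P₃)
    (h31 : (bellGraph G k).Adj P₃ P₁) :
    Xor'
      ((realizers P₁.1 P₂.1 ∩ realizers P₂.1 P₃.1 ∩ realizers P₃.1 P₁.1).Nonempty)
      ((∃ v : V, realizers P₁.1 P₂.1 = {v}) ∧ (∃ v : V, realizers P₂.1 P₃.1 = {v}) ∧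
        (∃ v : V, realizers P₃.1 P₁.1 = {v}) ∧
        Disjoint (realizers P₁.1 P₂.1) (realizers P₂.1 P₃.1) ∧
        Disjoint (realizers P₂.1 P₃.1) (realizers P₃.1 P₁.1) ∧
        Disjoint (realizers P₁.1 P₂.1) (realizers P₃.1 P₁.1)) ∧
    ((realizers P₁.1 P₂.1 ∩ realizers P₂.1 P₃.1 ∩ realizers P₃.1 P₁.1).Nonempty →
      ∃ u : V, eraseVtx P₁.1 u = eraseVtx P₂.1 u ∧ eraseVtx P₂.1 u = eraseVtx P₃.1 u ∧
        eraseVtx P₃.1 u = eraseVtx P₁.1 u) ∧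
    (((∃ v : V, realizers P₁.1 P₂.1 = {v}) ∧ (∃ v : V, realizers P₂.1 P₃.1 = {v}) ∧
        (∃ v : V, realizers P₃.1 P₁.1 = {v}) ∧
        Disjoint (realizers P₁.1 P₂.1) (realizers P₂.1 P₃.1) ∧
        Disjoint (realizers P₂.1 P₃.1) (realizers P₃.1 P₁.1) ∧
        Disjoint (realizers P₁.1 P₂.1) (realizers P₃.1 P₁.1)) →
      ¬ ∃ u : V, eraseVtx P₁.1 u = eraseVtx P₂.1 u ∧ eraseVtx P₂.1 u = eraseVtx P₃.1 u ∧
        eraseVtx P₃.1 u = eraseVtx P₁.1 u) := by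
  rw [← inter_realizers_nonempty_iff, disjoint_realizers_iff_inter_eq_empty,
    ← Set.not_nonempty_iff_eq_empty]
  by_cases hS : (realizers P₁.1 P₂.1 ∩ realizers P₂.1 P₃.1 ∩ realizers P₃.1 P₁.1).Nonempty
  · exact ⟨Or.inl ⟨hS, fun hT => hT.2.2.2 hS⟩, id, fun hT => hT.2.2.2⟩
  obtain ⟨d₁₂, d₂₃, d₁₃⟩ :=
    (disjoint_realizers_iff_inter_eq_empty _ _ _).2 (Set.not_nonempty_iff_eq_empty.1 hS)
  refine ⟨Or.inr ⟨⟨?_, ?_, ?_, hS⟩, hS⟩, id, fun hT => hT.2.2.2⟩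
  · exact exists_realizers_eq_singleton_of_disjoint h12 h23 h31 d₁₂ d₁₃
  · exact exists_realizers_eq_singleton_of_disjoint h23 h31 h12 d₂₃ d₁₂.symm
  · exact exists_realizers_eq_singleton_of_disjoint h31 h12 h23 d₁₃.symm d₂₃.symm
end

section
/- Let G be a finite simple graph and k ∈ ℕ. For any clique K = {P_1, …, P_m} with m ≥ 1 in B_k(G), exactly one of the following holds: (1) K is a cyclic T-triangle; (2) K is a radial T-triangle; (3) K is a split T-tetrahedron; (4) K is a fused T-tetrahedron; or (5) K is an S-clique. -/
/-!
A stable partition is recorded by its same-part relation, and `P − v = Q − v` says that two such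
relations agree on all pairs avoiding `v`. An edge has at most two realizers, and if it has two,
its ends differ exactly on that pair; this gives a Helly property: if every triangle of a clique
has an anchor, so does the clique. Otherwise the clique contains a T-triangle, whose
edges have distinct unique realizers `v₁, v₂, v₃`. Its three partitions agree on every pair
leaving `T = {v₁, v₂, v₃}` and never join a vertex of `T` to one outside, so everything happens
on the three pairs inside `T`: transitivity forces the cyclic shape `{vᵢ} ∣ T \ {vᵢ}` or makes `T`
a part of one of them (radial). A further partition adjacent to the triangle also agrees with it
off `T`, which leaves two mutually non-adjacent candidates in the cyclic case and one in the
radial case. Hence cliques have at most four vertices, and the candidates decide which triangles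
of a four-clique are anchored. Exclusiveness follows from cardinalities, from restricting anchors
to subcliques, and, for cyclic versus radial, from the uniqueness of the realizers, which makes
the triple part of a radial labelling equal to `T`, clashing with the singleton parts `{vᵢ}`.
-/

open SimpleGraph

variable {V : Type*} [Fintype V] [DecidableEq V]

/-- A cyclic T-triple of partitions. -/
def IsCyclicTTriple (P₁ P₂ P₃ : Multiset (Finset V)) : Prop :=
  ∃ v₁ v₂ v₃ : V, v₁ ≠ v₂ ∧ v₁ ≠ v₃ ∧ v₂ ≠ v₃ ∧
    eraseVtx P₁ v₃ = eraseVtx P₂ v₃ ∧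
    eraseVtx P₂ v₁ = eraseVtx P₃ v₁ ∧
    eraseVtx P₃ v₂ = eraseVtx P₁ v₂ ∧
    ({v₁} : Finset V) ∈ P₁ ∧ ({v₂} : Finset V) ∈ P₂ ∧ ({v₃} : Finset V) ∈ P₃

/-- A radial T-triple of partitions, with `P₁` containing the triple part. -/
def IsRadialTTriple (P₁ P₂ P₃ : Multiset (Finset V)) : Prop :=
  ∃ v₁ v₂ v₃ : V, v₁ ≠ v₂ ∧ v₁ ≠ v₃ ∧ v₂ ≠ v₃ ∧
    eraseVtx P₁ v₃ = eraseVtx P₂ v₃ ∧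
    eraseVtx P₂ v₁ = eraseVtx P₃ v₁ ∧
    eraseVtx P₃ v₂ = eraseVtx P₁ v₂ ∧
    ({v₁, v₂, v₃} : Finset V) ∈ P₁

variable (G : SimpleGraph V) (k : ℕ)

/-- An S-clique: a clique in `B_k(G)` admitting an anchor vertex realizing
every edge. -/
def IsSCliqueF (K : Finset {P : Multiset (Finset V) // IsStablePartition G k P}) : Prop :=
  (bellGraph G k).IsClique (K : Set _) ∧
    ∃ u : V, ∀ P ∈ K, ∀ Q ∈ K, eraseVtx P.1 u = eraseVtx Q.1 u

/-- A T-triangle: a 3-clique in `B_k(G)` admitting no anchor. -/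
def IsTTriangleF (K : Finset {P : Multiset (Finset V) // IsStablePartition G k P}) : Prop :=
  (bellGraph G k).IsClique (K : Set _) ∧ K.card = 3 ∧
    ¬ ∃ u : V, ∀ P ∈ K, ∀ Q ∈ K, eraseVtx P.1 u = eraseVtx Q.1 u

/-- A cyclic T-triangle in `B_k(G)`. -/
def IsCyclicTTriangleF (K : Finset {P : Multiset (Finset V) // IsStablePartition G k P}) :
    Prop :=
  IsTTriangleF G k K ∧ ∃ P₁ P₂ P₃, K = {P₁, P₂, P₃} ∧ IsCyclicTTriple P₁.1 P₂.1 P₃.1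

/-- A radial T-triangle in `B_k(G)`. -/
def IsRadialTTriangleF (K : Finset {P : Multiset (Finset V) // IsStablePartition G k P}) :
    Prop :=
  IsTTriangleF G k K ∧ ∃ P₁ P₂ P₃, K = {P₁, P₂, P₃} ∧ IsRadialTTriple P₁.1 P₂.1 P₃.1

/-- A fused T-tetrahedron: a 4-clique all four of whose triangles are
T-triangles. -/
def IsFusedTTetrahedronF (K : Finset {P : Multiset (Finset V) // IsStablePartition G k P}) :
    Prop :=
  (bellGraph G k).IsClique (K : Set _) ∧ K.card = 4 ∧
    ∀ T ⊆ K, T.card = 3 → IsTTriangleF G k T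

/-- A split T-tetrahedron: a 4-clique exactly three of whose triangles are
S-cliques and one of whose triangles is a T-triangle. -/
def IsSplitTTetrahedronF (K : Finset {P : Multiset (Finset V) // IsStablePartition G k P}) :
    Prop :=
  (bellGraph G k).IsClique (K : Set _) ∧ K.card = 4 ∧
    ∃ T ⊆ K, T.card = 3 ∧ IsTTriangleF G k T ∧
      ∀ T' ⊆ K, T'.card = 3 → T' ≠ T → IsSCliqueF G k T'

theorem Finset.eq_or_eq_or_eq_or_eq_of_subset_of_card_eq_three {α : Type*} [DecidableEq α]
    {a b c d : α} (hab : a ≠ b) (hac : a ≠ c) (had : a ≠ d) (hbc : b ≠ c) (hbd : b ≠ d)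
    (hcd : c ≠ d) {T : Finset α} (hT : T ⊆ {a, b, c, d}) (h3 : T.card = 3) :
    T = {a, b, c} ∨ T = {a, b, d} ∨ T = {a, c, d} ∨ T = {b, c, d} := by
  obtain ⟨x, hxT, hx⟩ := Finset.exists_eq_insert_iff.2
    ⟨hT, by rw [h3, Finset.card_eq_four.2 ⟨a, b, c, d, hab, hac, had, hbc, hbd, hcd, rfl⟩]⟩
  have hTx : T = ({a, b, c, d} : Finset α).erase x := by rw [← hx, Finset.erase_insert hxT]
  have hxK : x ∈ ({a, b, c, d} : Finset α) := hx ▸ Finset.mem_insert_self x T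
  simp only [Finset.mem_insert, Finset.mem_singleton] at hxK
  rcases hxK with rfl | rfl | rfl | rfl <;>
    simp [Finset.erase_insert_of_ne, Finset.erase_eq_of_notMem, *]

theorem Finset.ne_of_card_eq_three {α : Type*} [DecidableEq α] {a b c : α}
    (h : ({a, b, c} : Finset α).card = 3) : a ≠ b ∧ a ≠ c ∧ b ≠ c := by
  refine ⟨fun e => ?_, fun e => ?_, fun e => ?_⟩ <;> subst e
  · rw [Finset.insert_idem] at h
    exact absurd h (Finset.card_le_two.trans_lt (by norm_num)).ne
  · rw [Finset.insert_eq_self.2 (by simp)] at h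
    exact absurd h (Finset.card_le_two.trans_lt (by norm_num)).ne
  · rw [Finset.pair_eq_singleton] at h
    exact absurd h (Finset.card_le_two.trans_lt (by norm_num)).ne

namespace BellColoring

variable {α : Type*}

def SameBlock (P : Multiset (Finset α)) (x y : α) : Prop := ∃ s ∈ P, x ∈ s ∧ y ∈ s

section Partition

variable {P : Multiset (Finset α)} {S : Finset α} (hP : (P.map Finset.val).sum = S.val)
include hP

theorem exists_mem_of_mem {x : α} (hx : x ∈ S) : ∃ s ∈ P, x ∈ s := by
  rw [← Finset.mem_val, ← hP] at hx
  obtain ⟨_, hs', hx⟩ := Multiset.mem_join.1 hx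
  obtain ⟨s, hs, rfl⟩ := Multiset.mem_map.1 hs'
  exact ⟨s, hs, hx⟩

theorem disjoint_of_mem_erase [DecidableEq α] {s t : Finset α} (hs : s ∈ P) (ht : t ∈ P.erase s) :
    Disjoint s t := by
  have hnd : (s.val + ((P.erase s).map Finset.val).sum).Nodup := by
    rw [← Multiset.sum_cons, ← Multiset.map_cons, Multiset.cons_erase hs, hP]
    exact S.nodup
  exact Finset.disjoint_val.1 <| (Multiset.disjoint_of_nodup_add hnd).mono_right
    (Multiset.le_sum_of_mem (Multiset.mem_map_of_mem _ ht))

theorem eq_of_mem_of_mem [DecidableEq α] {s t : Finset α} (hs : s ∈ P) (ht : t ∈ P) {x : α}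
    (hxs : x ∈ s) (hxt : x ∈ t) : s = t := by
  by_contra hst
  exact Finset.disjoint_left.1
    (disjoint_of_mem_erase hP hs ((Multiset.mem_erase_of_ne (Ne.symm hst)).2 ht)) hxs hxt

theorem nodup_filter_nonempty [DecidableEq α] : (P.filter (·.Nonempty)).Nodup := by
  refine Multiset.nodup_iff_count_le_one.2 fun s => ?_
  by_contra! h
  rw [Multiset.count_filter] at h
  split_ifs at h with hne
  · have hs : s ∈ P := Multiset.count_pos.1 (by omega)
    have hs' : s ∈ P.erase s := by
      rw [← Multiset.count_pos, Multiset.count_erase_self]; omega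
    exact hne.ne_empty (Finset.disjoint_self_iff_empty _ |>.1 (disjoint_of_mem_erase hP hs hs'))
  · omega

theorem mem_iff_of_mem [DecidableEq α] {s : Finset α} (hs : s ∈ P) {x : α} (hx : x ∈ s) (y : α) :
    y ∈ s ↔ SameBlock P x y := by
  refine ⟨fun hy => ⟨s, hs, hx, hy⟩, ?_⟩
  rintro ⟨t, ht, hxt, hyt⟩
  rwa [eq_of_mem_of_mem hP hs ht hx hxt]

theorem mem_and_nonempty_iff [DecidableEq α] {s : Finset α} :
    s ∈ P ∧ s.Nonempty ↔ ∃ x ∈ s, ∀ y, y ∈ s ↔ SameBlock P x y := by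
  constructor
  · rintro ⟨hs, x, hx⟩
    exact ⟨x, hx, mem_iff_of_mem hP hs hx⟩
  · rintro ⟨x, hx, hs⟩
    obtain ⟨t, ht, hxt, -⟩ := (hs x).1 hx
    have hst : s = t := Finset.ext fun y => (hs y).trans (mem_iff_of_mem hP ht hxt y).symm
    exact ⟨hst ▸ ht, x, hx⟩

end Partition

theorem eq_of_sameBlock_eq [DecidableEq α] {P Q : Multiset (Finset α)} {S : Finset α}
    (hP : (P.map Finset.val).sum = S.val) (hQ : (Q.map Finset.val).sum = S.val)
    (hcard : Multiset.card P = Multiset.card Q) (h : SameBlock P = SameBlock Q) : P = Q := by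
  have hne : P.filter (·.Nonempty) = Q.filter (·.Nonempty) := by
    refine (Multiset.Nodup.ext (nodup_filter_nonempty hP) (nodup_filter_nonempty hQ)).2
      fun s => ?_
    simp only [Multiset.mem_filter, mem_and_nonempty_iff hP, mem_and_nonempty_iff hQ, h]
  have hempty (R : Multiset (Finset α)) : R.filter (¬·.Nonempty) =
      Multiset.replicate (Multiset.card (R.filter (¬·.Nonempty))) ∅ :=
    Multiset.eq_replicate_card.2 fun s hs =>
      Finset.not_nonempty_iff_eq_empty.1 (Multiset.mem_filter.1 hs).2
  have hcard' :
      Multiset.card (P.filter (¬·.Nonempty)) = Multiset.card (Q.filter (¬·.Nonempty)) := by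
    have hP' := Multiset.filter_add_not (·.Nonempty) P
    have hQ' := Multiset.filter_add_not (·.Nonempty) Q
    have hne' := congrArg Multiset.card hne
    apply_fun Multiset.card at hP' hQ'
    simp only [Multiset.card_add] at hP' hQ'
    omega
  rw [← Multiset.filter_add_not (·.Nonempty) P, ← Multiset.filter_add_not (·.Nonempty) Q, hne,
    hempty P, hempty Q, hcard']

theorem sameBlock_eraseVtx [DecidableEq α] {P : Multiset (Finset α)} {v x y : α} :
    SameBlock (eraseVtx P v) x y ↔ x ≠ v ∧ y ≠ v ∧ SameBlock P x y := by
  constructor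
  · rintro ⟨_, hs', hx, hy⟩
    obtain ⟨s, hs, rfl⟩ := Multiset.mem_map.1 hs'
    exact ⟨(Finset.mem_erase.1 hx).1, (Finset.mem_erase.1 hy).1, s, hs,
      (Finset.mem_erase.1 hx).2, (Finset.mem_erase.1 hy).2⟩
  · rintro ⟨hx, hy, s, hs, hxs, hys⟩
    exact ⟨s.erase v, Multiset.mem_map_of_mem _ hs, Finset.mem_erase.2 ⟨hx, hxs⟩,
      Finset.mem_erase.2 ⟨hy, hys⟩⟩

theorem sum_map_val_eraseVtx [DecidableEq α] {P : Multiset (Finset α)} {S : Finset α}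
    (hP : (P.map Finset.val).sum = S.val) (v : α) :
    ((eraseVtx P v).map Finset.val).sum = (S.erase v).val := by
  have hval (s : Finset α) : (s.erase v).val = s.val.filter (· ≠ v) := by
    rw [← Finset.filter_ne', Finset.filter_val]
  rw [eraseVtx, Multiset.map_map, hval, ← hP]
  change _ = Multiset.filter _ (Multiset.join _)
  rw [Multiset.filter_join, Multiset.map_map]
  exact congrArg Multiset.sum (Multiset.map_congr rfl fun s _ => hval s)

def AgreeOff (v : α) (r s : Setoid α) : Prop := ∀ x y, x ≠ v → y ≠ v → (r x y ↔ s x y)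

def AgreeOutside (T : Set α) (r s : Setoid α) : Prop := ∀ x y, x ∉ T → (r x y ↔ s x y)

def Anchored (r₁ r₂ r₃ : Setoid α) : Prop := ∃ u, AgreeOff u r₁ r₂ ∧ AgreeOff u r₂ r₃

theorem exists_not_iff_of_ne {r s : Setoid α} (h : r ≠ s) : ∃ x y, ¬(r x y ↔ s x y) := by
  by_contra! h'
  exact h (Setoid.ext h')

theorem rel_triangle (r : Setoid α) (a b c : α) :
    (r a b → r a c → r b c) ∧ (r a b → r b c → r a c) ∧ (r a c → r b c → r a b) :=
  ⟨fun h₁ h₂ => r.trans' (r.symm' h₁) h₂, fun h₁ h₂ => r.trans' h₁ h₂,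
    fun h₁ h₂ => r.trans' h₁ (r.symm' h₂)⟩

namespace AgreeOff

variable {r s t : Setoid α} {u v : α}

theorem refl (v : α) (r : Setoid α) : AgreeOff v r r := fun _ _ _ _ => Iff.rfl

theorem symm (h : AgreeOff v r s) : AgreeOff v s r := fun x y hx hy => (h x y hx hy).symm

theorem trans (h₁ : AgreeOff v r s) (h₂ : AgreeOff v s t) : AgreeOff v r t :=
  fun x y hx hy => (h₁ x y hx hy).trans (h₂ x y hx hy)

theorem eq_or_eq_of_not_iff (h : AgreeOff v r s) {x y : α} (hxy : ¬(r x y ↔ s x y)) :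
    x = v ∨ y = v := by
  by_contra! hne
  exact hxy (h x y hne.1 hne.2)

theorem not_iff_of_ne (hrs : r ≠ s) {a b : α} (ha : AgreeOff a r s) (hb : AgreeOff b r s)
    (hab : a ≠ b) : ¬(r a b ↔ s a b) := by
  obtain ⟨x, y, hxy⟩ := exists_not_iff_of_ne hrs
  rcases ha.eq_or_eq_of_not_iff hxy with rfl | rfl <;>
    rcases hb.eq_or_eq_of_not_iff hxy with rfl | rfl
  · exact absurd rfl hab
  · exact hxy
  · rwa [r.comm', s.comm']
  · exact absurd rfl hab

theorem eq_of_not_iff_of_not_iff (h : AgreeOff u r s) {p q w : α} (hp : ¬(r p w ↔ s p w))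
    (hq : ¬(r q w ↔ s q w)) (hpq : p ≠ q) : u = w := by
  rcases h.eq_or_eq_of_not_iff hp with rfl | rfl
  · rcases h.eq_or_eq_of_not_iff hq with rfl | rfl
    · exact absurd rfl hpq
    · rfl
  · rfl

theorem iff_or_iff_or_iff (h : AgreeOff u r s) {v₁ v₂ v₃ : α} (h₁₂ : v₁ ≠ v₂) (h₁₃ : v₁ ≠ v₃)
    (h₂₃ : v₂ ≠ v₃) :
    (r v₂ v₃ ↔ s v₂ v₃) ∨ (r v₁ v₃ ↔ s v₁ v₃) ∨ (r v₁ v₂ ↔ s v₁ v₂) := by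
  by_cases hu₂ : v₂ = u
  · subst hu₂; exact Or.inr (Or.inl (h _ _ h₁₂ h₂₃.symm))
  by_cases hu₃ : v₃ = u
  · subst hu₃; exact Or.inr (Or.inr (h _ _ h₁₃ h₂₃))
  exact Or.inl (h _ _ hu₂ hu₃)

end AgreeOff

theorem Anchored.rotate {r₁ r₂ r₃ : Setoid α} (h : Anchored r₁ r₂ r₃) : Anchored r₂ r₃ r₁ :=
  let ⟨u, h₁₂, h₂₃⟩ := h
  ⟨u, h₂₃, (h₁₂.trans h₂₃).symm⟩

namespace AgreeOutside

variable {T : Set α} {r s t : Setoid α}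

theorem refl (T : Set α) (r : Setoid α) : AgreeOutside T r r := fun _ _ _ => Iff.rfl

theorem symm (h : AgreeOutside T r s) : AgreeOutside T s r := fun x y hx => (h x y hx).symm

theorem trans (h₁ : AgreeOutside T r s) (h₂ : AgreeOutside T s t) : AgreeOutside T r t :=
  fun x y hx => (h₁ x y hx).trans (h₂ x y hx)

theorem mono (h : AgreeOutside T r s) {U : Set α} (hTU : T ⊆ U) : AgreeOutside U r s :=
  fun x y hx => h x y fun hxT => hx (hTU hxT)

theorem iff_of_notMem_right (h : AgreeOutside T r s) {x y : α} (hy : y ∉ T) :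
    r x y ↔ s x y := by
  rw [r.comm', s.comm']; exact h y x hy

theorem iff_of_rel (h : AgreeOutside T r s) {v x : α} (hx : x ∉ T) (hvx : r v x) (w : α) :
    r v w ↔ s v w := by
  have hsvx : s v x := (h.iff_of_notMem_right hx).1 hvx
  calc r v w ↔ r x w := ⟨r.trans' (r.symm' hvx), r.trans' hvx⟩
    _ ↔ s x w := h x w hx
    _ ↔ s v w := ⟨s.trans' hsvx, s.trans' (s.symm' hsvx)⟩

theorem iff_of_mem_of_mem (h : AgreeOutside T r s) {x y : α}
    (hT : x ∈ T → y ∈ T → (r x y ↔ s x y)) : r x y ↔ s x y := by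
  by_cases hx : x ∈ T
  · by_cases hy : y ∈ T
    · exact hT hx hy
    · exact h.iff_of_notMem_right hy
  · exact h x y hx

theorem agreeOff_of_subset (h : AgreeOutside T r s) {a b v : α} (hT : T ⊆ {a, b, v})
    (hab : r a b ↔ s a b) : AgreeOff v r s := fun x y hx hy => h.iff_of_mem_of_mem fun hxT hyT => by
  have hx' := hT hxT
  have hy' := hT hyT
  simp only [Set.mem_insert_iff, Set.mem_singleton_iff] at hx' hy'
  rcases hx' with rfl | rfl | rfl <;> rcases hy' with rfl | rfl | rfl <;>
    first
    | exact absurd rfl hx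
    | exact absurd rfl hy
    | exact iff_of_true (r.refl' _) (s.refl' _)
    | exact hab
    | rwa [r.comm', s.comm']

theorem mem_of_agreeOff (h : AgreeOutside T r s) (hrs : r ≠ s) {u : α} (hu : AgreeOff u r s) :
    u ∈ T := by
  by_contra huT
  exact hrs <| Setoid.ext fun x y => h.iff_of_mem_of_mem fun hx hy =>
    hu x y (fun e => huT (e ▸ hx)) (fun e => huT (e ▸ hy))

end AgreeOutside

section Triple

variable {v₁ v₂ v₃ : α} {r s : Setoid α}

theorem AgreeOutside.eq_of_iff (h : AgreeOutside {v₁, v₂, v₃} r s) (h₁ : r v₂ v₃ ↔ s v₂ v₃)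
    (h₂ : r v₁ v₃ ↔ s v₁ v₃) (h₃ : r v₁ v₂ ↔ s v₁ v₂) : r = s :=
  Setoid.ext fun x y => h.iff_of_mem_of_mem fun hx hy => by
    simp only [Set.mem_insert_iff, Set.mem_singleton_iff] at hx hy
    rcases hx with rfl | rfl | rfl <;> rcases hy with rfl | rfl | rfl <;>
      first
      | exact iff_of_true (r.refl' _) (s.refl' _)
      | assumption
      | rwa [r.comm', s.comm']

theorem subset_triple_rotate : ({v₁, v₂, v₃} : Set α) ⊆ {v₂, v₃, v₁} := by
  intro x; simp only [Set.mem_insert_iff, Set.mem_singleton_iff]; tauto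

theorem subset_triple_swap : ({v₁, v₂, v₃} : Set α) ⊆ {v₁, v₃, v₂} := by
  intro x; simp only [Set.mem_insert_iff, Set.mem_singleton_iff]; tauto

theorem anchored_iff {r₁ r₂ r₃ : Setoid α} (h₁₂ : AgreeOutside {v₁, v₂, v₃} r₁ r₂)
    (h₂₃ : AgreeOutside {v₁, v₂, v₃} r₂ r₃) (hv₁₂ : v₁ ≠ v₂) (hv₁₃ : v₁ ≠ v₃) (hv₂₃ : v₂ ≠ v₃) :
    Anchored r₁ r₂ r₃ ↔
      ((r₁ v₂ v₃ ↔ r₂ v₂ v₃) ∧ (r₂ v₂ v₃ ↔ r₃ v₂ v₃)) ∨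
      ((r₁ v₁ v₃ ↔ r₂ v₁ v₃) ∧ (r₂ v₁ v₃ ↔ r₃ v₁ v₃)) ∨
      ((r₁ v₁ v₂ ↔ r₂ v₁ v₂) ∧ (r₂ v₁ v₂ ↔ r₃ v₁ v₂)) := by
  constructor
  · rintro ⟨u, hu₁₂, hu₂₃⟩
    by_cases hu₂ : v₂ = u
    · subst hu₂
      exact Or.inr (Or.inl ⟨hu₁₂ _ _ hv₁₂ hv₂₃.symm, hu₂₃ _ _ hv₁₂ hv₂₃.symm⟩)
    by_cases hu₃ : v₃ = u
    · subst hu₃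
      exact Or.inr (Or.inr ⟨hu₁₂ _ _ hv₁₃ hv₂₃, hu₂₃ _ _ hv₁₃ hv₂₃⟩)
    exact Or.inl ⟨hu₁₂ _ _ hu₂ hu₃, hu₂₃ _ _ hu₂ hu₃⟩
  · rintro (⟨ha, hb⟩ | ⟨ha, hb⟩ | ⟨ha, hb⟩)
    · exact ⟨v₁, h₁₂.agreeOff_of_subset subset_triple_rotate ha,
        h₂₃.agreeOff_of_subset subset_triple_rotate hb⟩
    · exact ⟨v₂, h₁₂.agreeOff_of_subset subset_triple_swap ha,
        h₂₃.agreeOff_of_subset subset_triple_swap hb⟩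
    · exact ⟨v₃, h₁₂.agreeOff_of_subset subset_rfl ha, h₂₃.agreeOff_of_subset subset_rfl hb⟩

theorem AgreeOutside.iff_some_pair_and_not_all_pairs (h : AgreeOutside {v₁, v₂, v₃} r s)
    (hrs : r ≠ s) {w : α} (hw : AgreeOff w r s) (hv₁₂ : v₁ ≠ v₂) (hv₁₃ : v₁ ≠ v₃) (hv₂₃ : v₂ ≠ v₃) :
    ((r v₂ v₃ ↔ s v₂ v₃) ∨ (r v₁ v₃ ↔ s v₁ v₃) ∨ (r v₁ v₂ ↔ s v₁ v₂)) ∧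
      ¬((r v₂ v₃ ↔ s v₂ v₃) ∧ (r v₁ v₃ ↔ s v₁ v₃) ∧ (r v₁ v₂ ↔ s v₁ v₂)) :=
  ⟨hw.iff_or_iff_or_iff hv₁₂ hv₁₃ hv₂₃, fun ⟨h₁, h₂, h₃⟩ => hrs (h.eq_of_iff h₁ h₂ h₃)⟩

end Triple

structure IsTTriangle (r₁ r₂ r₃ : Setoid α) (v₁ v₂ v₃ : α) : Prop where
  agreeOff₃ : AgreeOff v₃ r₁ r₂
  agreeOff₁ : AgreeOff v₁ r₂ r₃
  agreeOff₂ : AgreeOff v₂ r₃ r₁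
  not_anchored : ¬Anchored r₁ r₂ r₃

namespace IsTTriangle

variable {r₁ r₂ r₃ : Setoid α} {v₁ v₂ v₃ : α} (h : IsTTriangle r₁ r₂ r₃ v₁ v₂ v₃)
include h

theorem rotate : IsTTriangle r₂ r₃ r₁ v₂ v₃ v₁ :=
  ⟨h.agreeOff₁, h.agreeOff₂, h.agreeOff₃, fun ha => h.not_anchored ha.rotate.rotate⟩

theorem ne₁₂ : v₁ ≠ v₂ := by
  rintro rfl
  exact h.not_anchored ⟨v₁, (h.agreeOff₁.trans h.agreeOff₂).symm, h.agreeOff₁⟩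

theorem ne₂₃ : v₂ ≠ v₃ := h.rotate.ne₁₂

theorem ne₁₃ : v₁ ≠ v₃ := h.rotate.rotate.ne₁₂.symm

theorem r₁_ne_r₂ : r₁ ≠ r₂ := by
  rintro rfl
  exact h.not_anchored ⟨v₁, .refl v₁ r₁, h.agreeOff₁⟩

theorem r₂_ne_r₃ : r₂ ≠ r₃ := h.rotate.r₁_ne_r₂

theorem r₁_ne_r₃ : r₁ ≠ r₃ := h.rotate.rotate.r₁_ne_r₂.symm

theorem agreeOutside₁₂ : AgreeOutside {v₁, v₂, v₃} r₁ r₂ := by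
  intro x y hx
  simp only [Set.mem_insert_iff, Set.mem_singleton_iff, not_or] at hx
  obtain ⟨hx₁, hx₂, hx₃⟩ := hx
  by_cases hy : y = v₃
  · subst hy
    exact (h.agreeOff₂ x y hx₂ h.ne₂₃.symm).symm.trans (h.agreeOff₁ x y hx₁ h.ne₁₃.symm).symm
  · exact h.agreeOff₃ x y hx₃ hy

theorem agreeOutside₂₃ : AgreeOutside {v₁, v₂, v₃} r₂ r₃ :=
  h.rotate.agreeOutside₁₂.mono (subset_triple_rotate.trans subset_triple_rotate)

theorem agreeOutside₁₃ : AgreeOutside {v₁, v₂, v₃} r₁ r₃ :=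
  h.agreeOutside₁₂.trans h.agreeOutside₂₃

theorem iff_on_pairs : (r₁ v₁ v₂ ↔ r₂ v₁ v₂) ∧ (r₂ v₂ v₃ ↔ r₃ v₂ v₃) ∧ (r₃ v₁ v₃ ↔ r₁ v₁ v₃) :=
  ⟨h.agreeOff₃ v₁ v₂ h.ne₁₃ h.ne₂₃, h.agreeOff₁ v₂ v₃ h.ne₁₂.symm h.ne₁₃.symm,
    h.agreeOff₂ v₁ v₃ h.ne₁₂ h.ne₂₃.symm⟩

theorem not_constant_on_pair :
    ¬(((r₁ v₂ v₃ ↔ r₂ v₂ v₃) ∧ (r₂ v₂ v₃ ↔ r₃ v₂ v₃)) ∨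
      ((r₁ v₁ v₃ ↔ r₂ v₁ v₃) ∧ (r₂ v₁ v₃ ↔ r₃ v₁ v₃)) ∨
      ((r₁ v₁ v₂ ↔ r₂ v₁ v₂) ∧ (r₂ v₁ v₂ ↔ r₃ v₁ v₂))) := fun hc =>
  h.not_anchored <|
    (anchored_iff h.agreeOutside₁₂ h.agreeOutside₂₃ h.ne₁₂ h.ne₁₃ h.ne₂₃).2 hc

theorem iff_some_pair_and_not_all_pairs {r s : Setoid α} {w : α}
    (hr : AgreeOutside {v₁, v₂, v₃} r r₁) (hs : AgreeOutside {v₁, v₂, v₃} s r₁) (hrs : r ≠ s)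
    (hw : AgreeOff w r s) :
    ((r v₂ v₃ ↔ s v₂ v₃) ∨ (r v₁ v₃ ↔ s v₁ v₃) ∨ (r v₁ v₂ ↔ s v₁ v₂)) ∧
      ¬((r v₂ v₃ ↔ s v₂ v₃) ∧ (r v₁ v₃ ↔ s v₁ v₃) ∧ (r v₁ v₂ ↔ s v₁ v₂)) :=
  (hr.trans hs.symm).iff_some_pair_and_not_all_pairs hrs hw h.ne₁₂ h.ne₁₃ h.ne₂₃

/-- A vertex of the triple is never joined to a vertex outside it: otherwise every pair through
it would be seen from outside the triple, hence related in the same way by all three setoids. -/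
theorem not_rel {v x : α} (hv : v ∈ ({v₁, v₂, v₃} : Set α)) (hx : x ∉ ({v₁, v₂, v₃} : Set α)) :
    ¬r₁ v x := by
  intro hvx
  have key (w : α) : (r₁ v w ↔ r₂ v w) ∧ (r₂ v w ↔ r₃ v w) :=
    ⟨h.agreeOutside₁₂.iff_of_rel hx hvx w,
      h.agreeOutside₂₃.iff_of_rel hx ((h.agreeOutside₁₂.iff_of_notMem_right hx).1 hvx) w⟩
  apply h.not_constant_on_pair
  simp only [Set.mem_insert_iff, Set.mem_singleton_iff] at hv
  rcases hv with rfl | rfl | rfl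
  · exact Or.inr (Or.inr (key v₂))
  · exact Or.inl (key v₃)
  · have h₁ := key v₁
    rw [r₁.comm', r₂.comm', r₃.comm'] at h₁
    exact Or.inr (Or.inl h₁)

theorem cyclic_or_radial_on_triple :
    (¬r₁ v₁ v₂ ∧ ¬r₁ v₁ v₃ ∧ ¬r₂ v₂ v₃ ∧ ¬r₂ v₂ v₁ ∧ ¬r₃ v₃ v₁ ∧ ¬r₃ v₃ v₂) ∨
      (r₁ v₁ v₂ ∧ r₁ v₁ v₃) ∨ (r₂ v₂ v₃ ∧ r₂ v₂ v₁) ∨ (r₃ v₃ v₁ ∧ r₃ v₃ v₂) := by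
  -- Code each `rᵢ` by which of the pairs `v₂v₃, v₁v₃, v₁v₂` it relates: transitivity and the
  -- constraints below leave `(100, 010, 001)` and the cases where one `rᵢ` is `111`.
  rw [r₂.comm' (x := v₂) (y := v₁), r₃.comm' (x := v₃) (y := v₁), r₃.comm' (x := v₃) (y := v₂)]
  have := h.not_constant_on_pair
  have := h.iff_on_pairs
  have := rel_triangle r₁ v₁ v₂ v₃
  have := rel_triangle r₂ v₁ v₂ v₃
  have := rel_triangle r₃ v₁ v₂ v₃
  grind

theorem rel_iff_eq {y : α} (h₂ : ¬r₁ v₁ v₂) (h₃ : ¬r₁ v₁ v₃) : r₁ v₁ y ↔ y = v₁ := by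
  refine ⟨fun hy => ?_, fun hy => hy ▸ r₁.refl' v₁⟩
  by_contra hyv
  by_cases hyT : y ∈ ({v₁, v₂, v₃} : Set α)
  · simp only [Set.mem_insert_iff, Set.mem_singleton_iff] at hyT
    rcases hyT with rfl | rfl | rfl
    exacts [hyv rfl, h₂ hy, h₃ hy]
  · exact h.not_rel (by simp) hyT hy

theorem rel_iff_mem {y : α} (h₂ : r₁ v₁ v₂) (h₃ : r₁ v₁ v₃) :
    r₁ v₁ y ↔ y = v₁ ∨ y = v₂ ∨ y = v₃ := by
  refine ⟨fun hy => ?_, ?_⟩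
  · by_contra hyT
    exact h.not_rel (by simp) (by simpa using hyT) hy
  · rintro (rfl | rfl | rfl)
    exacts [r₁.refl' _, h₂, h₃]

/-- A setoid adjacent to all three members of a T-triangle agrees with them outside the triple:
a pair `x y` with `x` outside on which it differed would have to meet every pair of the triple
on which the triangle is not constant, i.e. all three of them. -/
theorem agreeOutside_of_agreeOff {r : Setoid α} {w₁ w₂ w₃ : α} (h₁ : AgreeOff w₁ r r₁)
    (h₂ : AgreeOff w₂ r r₂) (h₃ : AgreeOff w₃ r r₃) : AgreeOutside {v₁, v₂, v₃} r r₁ := by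
  intro x y hx
  by_contra hxy
  have hxy₂ : ¬(r x y ↔ r₂ x y) := fun h' => hxy (h'.trans (h.agreeOutside₁₂ x y hx).symm)
  have hxy₃ : ¬(r x y ↔ r₃ x y) := fun h' => hxy (h'.trans (h.agreeOutside₁₃ x y hx).symm)
  have through {s : Setoid α} {w p q : α} (hw : AgreeOff w r s) (hxy' : ¬(r x y ↔ s x y))
      (hp : p ∈ ({v₁, v₂, v₃} : Set α)) (hq : q ∈ ({v₁, v₂, v₃} : Set α))
      (hpq : ¬(r p q ↔ s p q)) : y = p ∨ y = q := by
    rcases hw.eq_or_eq_of_not_iff hpq with rfl | rfl <;>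
      rcases hw.eq_or_eq_of_not_iff hxy' with rfl | rfl
    exacts [absurd hp hx, Or.inl rfl, absurd hq hx, Or.inr rfl]
  have meets {p q : α} (hp : p ∈ ({v₁, v₂, v₃} : Set α)) (hq : q ∈ ({v₁, v₂, v₃} : Set α))
      (hc : ¬((r₁ p q ↔ r₂ p q) ∧ (r₂ p q ↔ r₃ p q))) : y = p ∨ y = q := by
    by_cases e₁ : r p q ↔ r₁ p q
    · by_cases e₂ : r p q ↔ r₂ p q
      · exact through h₃ hxy₃ hp hq fun e₃ => hc ⟨e₁.symm.trans e₂, e₂.symm.trans e₃⟩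
      · exact through h₂ hxy₂ hp hq e₂
    · exact through h₁ hxy hp hq e₁
  simp only [Set.mem_insert_iff, Set.mem_singleton_iff, not_or] at hx
  have hconst := h.not_constant_on_pair
  simp only [not_or] at hconst
  obtain ⟨ha, hb, hc⟩ := hconst
  have hyb := meets (by simp) (by simp) hb
  have hyc := meets (by simp) (by simp) hc
  rcases meets (by simp) (by simp) ha with rfl | rfl
  · rcases hyb with e | e
    exacts [h.ne₁₂ e.symm, h.ne₂₃ e]
  · rcases hyc with e | e
    exacts [h.ne₁₃ e.symm, h.ne₂₃ e.symm]

theorem anchored_all_or_none {r : Setoid α} {w₁ w₂ w₃ : α} (h₁ : AgreeOff w₁ r r₁)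
    (h₂ : AgreeOff w₂ r r₂) (h₃ : AgreeOff w₃ r r₃) (hne₁ : r ≠ r₁) (hne₂ : r ≠ r₂)
    (hne₃ : r ≠ r₃) :
    (Anchored r₁ r₂ r ∧ Anchored r₁ r₃ r ∧ Anchored r₂ r₃ r) ∨
      (¬Anchored r₁ r₂ r ∧ ¬Anchored r₁ r₃ r ∧ ¬Anchored r₂ r₃ r) := by
  have o₁ := h.agreeOutside_of_agreeOff h₁ h₂ h₃
  have o₂ := o₁.trans h.agreeOutside₁₂
  have o₃ := o₁.trans h.agreeOutside₁₃
  rw [anchored_iff h.agreeOutside₁₂ o₂.symm h.ne₁₂ h.ne₁₃ h.ne₂₃,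
    anchored_iff h.agreeOutside₁₃ o₃.symm h.ne₁₂ h.ne₁₃ h.ne₂₃,
    anchored_iff h.agreeOutside₂₃ o₃.symm h.ne₁₂ h.ne₁₃ h.ne₂₃]
  have := h.iff_some_pair_and_not_all_pairs o₁ (.refl _ _) hne₁ h₁
  have := h.iff_some_pair_and_not_all_pairs o₁ h.agreeOutside₁₂.symm hne₂ h₂
  have := h.iff_some_pair_and_not_all_pairs o₁ h.agreeOutside₁₃.symm hne₃ h₃
  have := h.not_constant_on_pair
  have := h.iff_on_pairs
  have := rel_triangle r v₁ v₂ v₃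
  have := rel_triangle r₁ v₁ v₂ v₃
  have := rel_triangle r₂ v₁ v₂ v₃
  have := rel_triangle r₃ v₁ v₂ v₃
  -- In the coding of `cyclic_or_radial_on_triple`, `r` is `000` or `111` over a cyclic triangle;
  -- over a radial one it relates exactly the pair that neither non-central setoid relates.
  -- Either way its three triangles behave alike.
  grind (splits := 40)

theorem not_agreeOff_of_fifth {r r' : Setoid α} {w₁ w₂ w₃ w₁' w₂' w₃' w : α}
    (h₁ : AgreeOff w₁ r r₁) (h₂ : AgreeOff w₂ r r₂) (h₃ : AgreeOff w₃ r r₃)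
    (h₁' : AgreeOff w₁' r' r₁) (h₂' : AgreeOff w₂' r' r₂) (h₃' : AgreeOff w₃' r' r₃)
    (hne₁ : r ≠ r₁) (hne₂ : r ≠ r₂) (hne₃ : r ≠ r₃)
    (hne₁' : r' ≠ r₁) (hne₂' : r' ≠ r₂) (hne₃' : r' ≠ r₃) (hne : r ≠ r') :
    ¬AgreeOff w r r' := by
  intro hw
  have o₁ := h.agreeOutside_of_agreeOff h₁ h₂ h₃
  have o₁' := h.agreeOutside_of_agreeOff h₁' h₂' h₃'
  have := h.iff_some_pair_and_not_all_pairs o₁ (.refl _ _) hne₁ h₁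
  have := h.iff_some_pair_and_not_all_pairs o₁ h.agreeOutside₁₂.symm hne₂ h₂
  have := h.iff_some_pair_and_not_all_pairs o₁ h.agreeOutside₁₃.symm hne₃ h₃
  have := h.iff_some_pair_and_not_all_pairs o₁' (.refl _ _) hne₁' h₁'
  have := h.iff_some_pair_and_not_all_pairs o₁' h.agreeOutside₁₂.symm hne₂' h₂'
  have := h.iff_some_pair_and_not_all_pairs o₁' h.agreeOutside₁₃.symm hne₃' h₃'
  have := h.iff_some_pair_and_not_all_pairs o₁ o₁' hne hw
  have := h.not_constant_on_pair
  have := h.iff_on_pairs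
  have := rel_triangle r v₁ v₂ v₃
  have := rel_triangle r' v₁ v₂ v₃
  have := rel_triangle r₁ v₁ v₂ v₃
  have := rel_triangle r₂ v₁ v₂ v₃
  have := rel_triangle r₃ v₁ v₂ v₃
  -- By the same patterns, `r` and `r'` would be `000` and `111`, which differ on every pair of
  -- the triple, or they would coincide.
  grind (splits := 60)

end IsTTriangle

theorem false_of_anchored_of_anchored {r₁ r₂ t₁ t₂ : Setoid α} {a b : α} (hab : a ≠ b)
    (hdab : ¬(r₁ a b ↔ r₂ a b)) (hbt₁ : AgreeOff b r₁ t₁) (hat₁ : ¬AgreeOff a r₁ t₁)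
    (hat₂ : AgreeOff a r₁ t₂) (hbt₂ : ¬AgreeOff b r₁ t₂) (h₁ : Anchored r₁ t₁ t₂)
    (h₂ : Anchored r₂ t₁ t₂) : False := by
  obtain ⟨w, hwt₁, hwt₁₂⟩ := h₁
  have hwa : w ≠ a := by rintro rfl; exact hat₁ hwt₁
  have hwb : w ≠ b := by rintro rfl; exact hbt₂ (hwt₁.trans hwt₁₂)
  have hd₁ : ¬(r₁ b w ↔ t₁ b w) := AgreeOff.not_iff_of_ne
    (by rintro rfl; exact hat₁ (.refl _ _)) hbt₁ hwt₁ hwb.symm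
  have hd₂ : ¬(r₁ a w ↔ t₂ a w) := AgreeOff.not_iff_of_ne
    (by rintro rfl; exact hbt₂ (.refl _ _)) hat₂ (hwt₁.trans hwt₁₂) hwa.symm
  have hd₁₂ : ¬(t₁ b w ↔ t₂ b w) := fun h' => hd₁ ((hat₂ b w hab.symm hwa).trans h'.symm)
  have hd₁₂' : ¬(t₁ a w ↔ t₂ a w) := fun h' => hd₂ ((hbt₁ a w hab hwb).trans h')
  -- `t₁, t₂` differ on `{b, w}` and on `{a, w}`, so `w` is also the anchor of `r₂ t₁ t₂`.
  obtain ⟨w', hw'₁, hw'₁₂⟩ := h₂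
  obtain rfl : w' = w := hw'₁₂.eq_of_not_iff_of_not_iff hd₁₂ hd₁₂' hab.symm
  exact absurd ((hwt₁ a b hwa.symm hwb.symm).trans (hw'₁ a b hwa.symm hwb.symm).symm) hdab

/-- A Helly property. Two distinct members `r₁, r₂` have at most two realizers `a, b`; if neither
anchors the whole family, members `t₁, t₂` witnessing this lead to a triple without anchor. -/
theorem exists_anchor_of_forall_anchored [Nonempty α] {S : Set (Setoid α)}
    (hS : ∀ r ∈ S, ∀ s ∈ S, ∀ t ∈ S, Anchored r s t) : ∃ u, ∀ r ∈ S, ∀ s ∈ S, AgreeOff u r s := by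
  by_cases htwo : ∃ r₁ ∈ S, ∃ r₂ ∈ S, r₁ ≠ r₂
  swap
  · push Not at htwo
    obtain ⟨u⟩ := ‹Nonempty α›
    exact ⟨u, fun r hr s hs => htwo r hr s hs ▸ AgreeOff.refl u r⟩
  obtain ⟨r₁, hr₁, r₂, hr₂, hne⟩ := htwo
  have of_base {u : α} (hu : ∀ t ∈ S, AgreeOff u r₁ t) : ∃ u, ∀ r ∈ S, ∀ s ∈ S, AgreeOff u r s :=
    ⟨u, fun r hr s hs => (hu r hr).symm.trans (hu s hs)⟩
  obtain ⟨a, ha, -⟩ := hS r₁ hr₁ r₂ hr₂ r₂ hr₂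
  by_cases hta : ∀ t ∈ S, AgreeOff a r₁ t
  · exact of_base hta
  push Not at hta
  obtain ⟨t₁, ht₁, hat₁⟩ := hta
  obtain ⟨b, hb, hbt₁⟩ := hS r₁ hr₁ r₂ hr₂ t₁ ht₁
  have hab : a ≠ b := by rintro rfl; exact hat₁ (hb.trans hbt₁)
  by_cases htb : ∀ t ∈ S, AgreeOff b r₁ t
  · exact of_base htb
  push Not at htb
  obtain ⟨t₂, ht₂, hbt₂⟩ := htb
  have hdab : ¬(r₁ a b ↔ r₂ a b) := AgreeOff.not_iff_of_ne hne ha hb hab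
  have hat₂ : AgreeOff a r₁ t₂ := by
    obtain ⟨c, hc, hct₂⟩ := hS r₁ hr₁ r₂ hr₂ t₂ ht₂
    rcases hc.eq_or_eq_of_not_iff hdab with rfl | rfl
    · exact hc.trans hct₂
    · exact absurd (hc.trans hct₂) hbt₂
  exact (false_of_anchored_of_anchored hab hdab (hb.trans hbt₁) hat₁ hat₂ hbt₂
    (hS r₁ hr₁ t₁ ht₁ t₂ ht₂) (hS r₂ hr₂ t₁ ht₁ t₂ ht₂)).elim

section StablePartition

variable {G : SimpleGraph V} {k : ℕ} {P Q : Multiset (Finset V)}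

def _root_.IsStablePartition.setoid (hP : IsStablePartition G k P) : Setoid V where
  r := SameBlock P
  iseqv := {
    refl := fun x =>
      let ⟨s, hs, hx⟩ := exists_mem_of_mem hP.2.1 (Finset.mem_univ x)
      ⟨s, hs, hx, hx⟩
    symm := fun ⟨s, hs, hx, hy⟩ => ⟨s, hs, hy, hx⟩
    trans := fun ⟨s, hs, hx, hy⟩ ⟨_, ht, hy', hz⟩ =>
      ⟨s, hs, hx, eq_of_mem_of_mem hP.2.1 hs ht hy hy' ▸ hz⟩ }

theorem setoid_injective (hP : IsStablePartition G k P) (hQ : IsStablePartition G k Q)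
    (h : hP.setoid = hQ.setoid) : P = Q :=
  eq_of_sameBlock_eq hP.2.1 hQ.2.1 (hP.1.trans hQ.1.symm)
    (funext₂ fun x y => propext (Setoid.ext_iff.1 h x y))

theorem eraseVtx_eq_iff (hP : IsStablePartition G k P) (hQ : IsStablePartition G k Q) {v : V} :
    eraseVtx P v = eraseVtx Q v ↔ AgreeOff v hP.setoid hQ.setoid := by
  constructor
  · intro h x y hx hy
    have key (R : Multiset (Finset V)) : SameBlock (eraseVtx R v) x y ↔ SameBlock R x y := by
      rw [sameBlock_eraseVtx]
      exact ⟨fun h => h.2.2, fun h => ⟨hx, hy, h⟩⟩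
    exact (key P).symm.trans (by rw [h]; exact key Q)
  · intro h
    refine eq_of_sameBlock_eq (sum_map_val_eraseVtx hP.2.1 v) (sum_map_val_eraseVtx hQ.2.1 v)
      (by simp only [eraseVtx, Multiset.card_map, hP.1, hQ.1]) (funext₂ fun x y => propext ?_)
    simp only [sameBlock_eraseVtx]
    exact ⟨fun ⟨hx, hy, hb⟩ => ⟨hx, hy, (h x y hx hy).1 hb⟩,
      fun ⟨hx, hy, hb⟩ => ⟨hx, hy, (h x y hx hy).2 hb⟩⟩

theorem mem_of_forall_iff (hP : IsStablePartition G k P) {x : V} {s : Finset V}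
    (hs : ∀ y, hP.setoid x y ↔ y ∈ s) : s ∈ P :=
  ((mem_and_nonempty_iff hP.2.1).2 ⟨x, (hs x).1 (hP.setoid.refl' x), fun y => (hs y).symm⟩).1

end StablePartition

section BellGraph

variable {G : SimpleGraph V} {k : ℕ}
  {K : Finset {P : Multiset (Finset V) // IsStablePartition G k P}}
  {A B C D : {P : Multiset (Finset V) // IsStablePartition G k P}} {v₁ v₂ v₃ : V}

theorem setoid_ne (h : A ≠ B) : A.2.setoid ≠ B.2.setoid := fun e =>
  h (Subtype.ext (setoid_injective A.2 B.2 e))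

theorem exists_anchor_iff :
    (∃ u, ∀ P ∈ K, ∀ Q ∈ K, eraseVtx P.1 u = eraseVtx Q.1 u) ↔
      ∃ u, ∀ P ∈ K, ∀ Q ∈ K, AgreeOff u P.2.setoid Q.2.setoid :=
  exists_congr fun _ => forall₂_congr fun P _ => forall₂_congr fun Q _ => eraseVtx_eq_iff P.2 Q.2

theorem exists_anchor_triple_iff :
    (∃ u, ∀ P ∈ ({A, B, C} : Finset _), ∀ Q ∈ ({A, B, C} : Finset _),
      eraseVtx P.1 u = eraseVtx Q.1 u) ↔ Anchored A.2.setoid B.2.setoid C.2.setoid := by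
  rw [exists_anchor_iff]
  refine exists_congr fun u => ⟨fun h => ⟨h A (by simp) B (by simp), h B (by simp) C (by simp)⟩,
    fun ⟨hAB, hBC⟩ => ?_⟩
  have hA : ∀ P ∈ ({A, B, C} : Finset _), AgreeOff u A.2.setoid P.2.setoid := by
    simp only [Finset.mem_insert, Finset.mem_singleton]
    rintro P (rfl | rfl | rfl)
    exacts [.refl _ _, hAB, hAB.trans hBC]
  exact fun P hP Q hQ => (hA P hP).symm.trans (hA Q hQ)

theorem exists_agreeOff_of_isClique (hK : (bellGraph G k).IsClique (K : Set _)) (hA : A ∈ K)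
    (hB : B ∈ K) (hAB : A ≠ B) : ∃ v, AgreeOff v A.2.setoid B.2.setoid :=
  let ⟨_, v, hv⟩ := hK hA hB hAB
  ⟨v, (eraseVtx_eq_iff A.2 B.2).1 hv⟩

theorem isSCliqueF_of_anchored (hK : (bellGraph G k).IsClique (({A, B, C} : Finset _) : Set _))
    (h : Anchored A.2.setoid B.2.setoid C.2.setoid) : IsSCliqueF G k {A, B, C} :=
  ⟨hK, exists_anchor_triple_iff.2 h⟩

theorem isTTriangleF_of_not_anchored
    (hK : (bellGraph G k).IsClique (({A, B, C} : Finset _) : Set _)) (hAB : A ≠ B) (hAC : A ≠ C)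
    (hBC : B ≠ C) (h : ¬Anchored A.2.setoid B.2.setoid C.2.setoid) : IsTTriangleF G k {A, B, C} :=
  ⟨hK, Finset.card_eq_three.2 ⟨A, B, C, hAB, hAC, hBC, rfl⟩,
    fun ha => h (exists_anchor_triple_iff.1 ha)⟩

theorem not_isSCliqueF_of_subset {T : Finset _} (hTK : T ⊆ K) (hT : IsTTriangleF G k T) :
    ¬IsSCliqueF G k K := fun ⟨_, u, hu⟩ =>
  hT.2.2 ⟨u, fun P hP Q hQ => hu P (hTK hP) Q (hTK hQ)⟩

theorem IsTTriangleF.isTTriangle (hT : IsTTriangleF G k {A, B, C})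
    (h₃ : eraseVtx A.1 v₃ = eraseVtx B.1 v₃) (h₁ : eraseVtx B.1 v₁ = eraseVtx C.1 v₁)
    (h₂ : eraseVtx C.1 v₂ = eraseVtx A.1 v₂) :
    IsTTriangle A.2.setoid B.2.setoid C.2.setoid v₁ v₂ v₃ :=
  ⟨(eraseVtx_eq_iff _ _).1 h₃, (eraseVtx_eq_iff _ _).1 h₁, (eraseVtx_eq_iff _ _).1 h₂,
    fun ha => hT.2.2 (exists_anchor_triple_iff.2 ha)⟩

namespace IsTTriangle

variable (h : IsTTriangle A.2.setoid B.2.setoid C.2.setoid v₁ v₂ v₃)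
include h

theorem pairwise_ne : A ≠ B ∧ A ≠ C ∧ B ≠ C :=
  ⟨fun e => h.r₁_ne_r₂ (e ▸ rfl), fun e => h.r₁_ne_r₃ (e ▸ rfl), fun e => h.r₂_ne_r₃ (e ▸ rfl)⟩

theorem isTTriangleF (hK : (bellGraph G k).IsClique (({A, B, C} : Finset _) : Set _)) :
    IsTTriangleF G k {A, B, C} :=
  isTTriangleF_of_not_anchored hK h.pairwise_ne.1 h.pairwise_ne.2.1 h.pairwise_ne.2.2 h.not_anchored

theorem mem_of_eraseVtx_eq {X Y : {P : Multiset (Finset V) // IsStablePartition G k P}}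
    (hX : X ∈ ({A, B, C} : Finset _)) (hY : Y ∈ ({A, B, C} : Finset _)) (hXY : X ≠ Y) {u : V}
    (e : eraseVtx X.1 u = eraseVtx Y.1 u) : u ∈ ({v₁, v₂, v₃} : Finset V) := by
  have hout : ∀ P ∈ ({A, B, C} : Finset _), AgreeOutside {v₁, v₂, v₃} P.2.setoid A.2.setoid := by
    simp only [Finset.mem_insert, Finset.mem_singleton]
    rintro P (rfl | rfl | rfl)
    exacts [.refl _ _, h.agreeOutside₁₂.symm, h.agreeOutside₁₃.symm]
  simpa using ((hout X hX).trans (hout Y hY).symm).mem_of_agreeOff (setoid_ne hXY)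
    ((eraseVtx_eq_iff X.2 Y.2).1 e)

theorem isCyclicTTriple (h₁₂ : ¬A.2.setoid v₁ v₂) (h₁₃ : ¬A.2.setoid v₁ v₃)
    (h₂₃ : ¬B.2.setoid v₂ v₃) (h₂₁ : ¬B.2.setoid v₂ v₁) (h₃₁ : ¬C.2.setoid v₃ v₁)
    (h₃₂ : ¬C.2.setoid v₃ v₂) : IsCyclicTTriple A.1 B.1 C.1 :=
  ⟨v₁, v₂, v₃, h.ne₁₂, h.ne₁₃, h.ne₂₃, (eraseVtx_eq_iff _ _).2 h.agreeOff₃,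
    (eraseVtx_eq_iff _ _).2 h.agreeOff₁, (eraseVtx_eq_iff _ _).2 h.agreeOff₂,
    mem_of_forall_iff A.2 fun y => by rw [Finset.mem_singleton]; exact h.rel_iff_eq h₁₂ h₁₃,
    mem_of_forall_iff B.2 fun y => by rw [Finset.mem_singleton]; exact h.rotate.rel_iff_eq h₂₃ h₂₁,
    mem_of_forall_iff C.2 fun y => by
      rw [Finset.mem_singleton]; exact h.rotate.rotate.rel_iff_eq h₃₁ h₃₂⟩

theorem isRadialTTriple (h₁₂ : A.2.setoid v₁ v₂) (h₁₃ : A.2.setoid v₁ v₃) :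
    IsRadialTTriple A.1 B.1 C.1 :=
  ⟨v₁, v₂, v₃, h.ne₁₂, h.ne₁₃, h.ne₂₃, (eraseVtx_eq_iff _ _).2 h.agreeOff₃,
    (eraseVtx_eq_iff _ _).2 h.agreeOff₁, (eraseVtx_eq_iff _ _).2 h.agreeOff₂,
    mem_of_forall_iff A.2 fun y => by
      simp only [Finset.mem_insert, Finset.mem_singleton]; exact h.rel_iff_mem h₁₂ h₁₃⟩

theorem isCyclic_or_isRadial (hK : (bellGraph G k).IsClique (({A, B, C} : Finset _) : Set _)) :
    IsCyclicTTriangleF G k {A, B, C} ∨ IsRadialTTriangleF G k {A, B, C} := by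
  have hT := h.isTTriangleF hK
  have hrot : ({A, B, C} : Finset _) = {B, C, A} := by
    ext; simp only [Finset.mem_insert, Finset.mem_singleton]; tauto
  have hrot' : ({A, B, C} : Finset _) = {C, A, B} := by
    ext; simp only [Finset.mem_insert, Finset.mem_singleton]; tauto
  rcases h.cyclic_or_radial_on_triple with
    ⟨h₁₂, h₁₃, h₂₃, h₂₁, h₃₁, h₃₂⟩ | ⟨h₁₂, h₁₃⟩ | ⟨h₂₃, h₂₁⟩ | ⟨h₃₁, h₃₂⟩
  · exact Or.inl ⟨hT, A, B, C, rfl, h.isCyclicTTriple h₁₂ h₁₃ h₂₃ h₂₁ h₃₁ h₃₂⟩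
  · exact Or.inr ⟨hT, A, B, C, rfl, h.isRadialTTriple h₁₂ h₁₃⟩
  · exact Or.inr ⟨hT, B, C, A, hrot, h.rotate.isRadialTTriple h₂₃ h₂₁⟩
  · exact Or.inr ⟨hT, C, A, B, hrot', h.rotate.rotate.isRadialTTriple h₃₁ h₃₂⟩

theorem isSplit_or_isFused (hK : (bellGraph G k).IsClique (({A, B, C, D} : Finset _) : Set _))
    (hDA : D ≠ A) (hDB : D ≠ B) (hDC : D ≠ C) :
    IsSplitTTetrahedronF G k {A, B, C, D} ∨ IsFusedTTetrahedronF G k {A, B, C, D} := by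
  obtain ⟨hAB, hAC, hBC⟩ := h.pairwise_ne
  obtain ⟨w₁, hw₁⟩ := exists_agreeOff_of_isClique hK (by simp) (by simp) hDA
  obtain ⟨w₂, hw₂⟩ := exists_agreeOff_of_isClique hK (by simp) (by simp) hDB
  obtain ⟨w₃, hw₃⟩ := exists_agreeOff_of_isClique hK (by simp) (by simp) hDC
  have h4 : ({A, B, C, D} : Finset _).card = 4 :=
    Finset.card_eq_four.2 ⟨A, B, C, D, hAB, hAC, hDA.symm, hBC, hDB.symm, hDC.symm, rfl⟩
  have hsub (T : Finset _) (hT : T ⊆ {A, B, C, D}) : (bellGraph G k).IsClique (T : Set _) :=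
    hK.subset (Finset.coe_subset.2 hT)
  have triangles (P : Finset _ → Prop) (habc : P {A, B, C}) (habd : P {A, B, D})
      (hacd : P {A, C, D}) (hbcd : P {B, C, D}) :
      ∀ T ⊆ ({A, B, C, D} : Finset _), T.card = 3 → P T := fun T hT h3 => by
    rcases Finset.eq_or_eq_or_eq_or_eq_of_subset_of_card_eq_three hAB hAC hDA.symm hBC hDB.symm
      hDC.symm hT h3 with rfl | rfl | rfl | rfl <;> assumption
  have habc : ({A, B, C} : Finset _) ⊆ {A, B, C, D} := by intro x; simp; tauto
  have habd : ({A, B, D} : Finset _) ⊆ {A, B, C, D} := by intro x; simp; tauto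
  have hacd : ({A, C, D} : Finset _) ⊆ {A, B, C, D} := by intro x; simp; tauto
  have hbcd : ({B, C, D} : Finset _) ⊆ {A, B, C, D} := by intro x; simp; tauto
  have hT := h.isTTriangleF (hsub _ habc)
  rcases h.anchored_all_or_none hw₁ hw₂ hw₃ (setoid_ne hDA) (setoid_ne hDB)
    (setoid_ne hDC) with ⟨h₁, h₂, h₃⟩ | ⟨h₁, h₂, h₃⟩
  · refine Or.inl ⟨hK, h4, {A, B, C}, habc, hT.2.1, hT,
      triangles (fun T => T ≠ {A, B, C} → IsSCliqueF G k T) (absurd rfl)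
        (fun _ => isSCliqueF_of_anchored (hsub _ habd) h₁)
        (fun _ => isSCliqueF_of_anchored (hsub _ hacd) h₂)
        (fun _ => isSCliqueF_of_anchored (hsub _ hbcd) h₃)⟩
  · exact Or.inr ⟨hK, h4, triangles _ hT
      (isTTriangleF_of_not_anchored (hsub _ habd) hAB hDA.symm hDB.symm h₁)
      (isTTriangleF_of_not_anchored (hsub _ hacd) hAC hDA.symm hDC.symm h₂)
      (isTTriangleF_of_not_anchored (hsub _ hbcd) hBC hDB.symm hDC.symm h₃)⟩

theorem card_le_four (hK : (bellGraph G k).IsClique (K : Set _)) (hA : A ∈ K) (hB : B ∈ K)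
    (hC : C ∈ K) : K.card ≤ 4 := by
  by_contra! h5
  have habc : ({A, B, C} : Finset _) ⊆ K := by
    intro x; simp only [Finset.mem_insert, Finset.mem_singleton]; rintro (rfl | rfl | rfl) <;>
      assumption
  have h2 : 1 < (K \ {A, B, C}).card := by
    rw [Finset.card_sdiff_of_subset habc]
    have := Finset.card_le_three (a := A) (b := B) (c := C)
    omega
  obtain ⟨D, hD, E, hE, hDE⟩ := Finset.one_lt_card.1 h2
  simp only [Finset.mem_sdiff, Finset.mem_insert, Finset.mem_singleton, not_or] at hD hE
  obtain ⟨hDK, hDA, hDB, hDC⟩ := hD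
  obtain ⟨hEK, hEA, hEB, hEC⟩ := hE
  obtain ⟨w₁, hw₁⟩ := exists_agreeOff_of_isClique hK hDK hA hDA
  obtain ⟨w₂, hw₂⟩ := exists_agreeOff_of_isClique hK hDK hB hDB
  obtain ⟨w₃, hw₃⟩ := exists_agreeOff_of_isClique hK hDK hC hDC
  obtain ⟨w₁', hw₁'⟩ := exists_agreeOff_of_isClique hK hEK hA hEA
  obtain ⟨w₂', hw₂'⟩ := exists_agreeOff_of_isClique hK hEK hB hEB
  obtain ⟨w₃', hw₃'⟩ := exists_agreeOff_of_isClique hK hEK hC hEC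
  obtain ⟨w, hw⟩ := exists_agreeOff_of_isClique hK hDK hEK hDE
  exact h.not_agreeOff_of_fifth hw₁ hw₂ hw₃ hw₁' hw₂' hw₃' (setoid_ne hDA) (setoid_ne hDB)
    (setoid_ne hDC) (setoid_ne hEA) (setoid_ne hEB) (setoid_ne hEC) (setoid_ne hDE) hw

end IsTTriangle

theorem exists_isTTriangle [Nonempty V] (hK : (bellGraph G k).IsClique (K : Set _))
    (hS : ¬IsSCliqueF G k K) :
    ∃ A ∈ K, ∃ B ∈ K, ∃ C ∈ K, ∃ v₁ v₂ v₃,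
      IsTTriangle A.2.setoid B.2.setoid C.2.setoid v₁ v₂ v₃ := by
  have hadj {X Y} (hX : X ∈ K) (hY : Y ∈ K) : ∃ v, AgreeOff v X.2.setoid Y.2.setoid := by
    by_cases hXY : X = Y
    · exact ⟨Classical.arbitrary V, hXY ▸ .refl _ _⟩
    · exact exists_agreeOff_of_isClique hK hX hY hXY
  obtain ⟨A, hA, B, hB, C, hC, hABC⟩ : ∃ A ∈ K, ∃ B ∈ K, ∃ C ∈ K,
      ¬Anchored A.2.setoid B.2.setoid C.2.setoid := by
    by_contra! hall
    obtain ⟨u, hu⟩ := exists_anchor_of_forall_anchored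
      (S := (fun P : {P : Multiset (Finset V) // IsStablePartition G k P} => P.2.setoid) '' K) <| by
      rintro _ ⟨A, hA, rfl⟩ _ ⟨B, hB, rfl⟩ _ ⟨C, hC, rfl⟩
      exact hall A hA B hB C hC
    exact hS ⟨hK, exists_anchor_iff.2 ⟨u, fun P hP Q hQ => hu _ ⟨P, hP, rfl⟩ _ ⟨Q, hQ, rfl⟩⟩⟩
  obtain ⟨v₃, h₃⟩ := hadj hA hB
  obtain ⟨v₁, h₁⟩ := hadj hB hC
  obtain ⟨v₂, h₂⟩ := hadj hC hA
  exact ⟨A, hA, B, hB, C, hC, v₁, v₂, v₃, h₃, h₁, h₂, hABC⟩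

theorem isCyclic_or_isRadial_or_isSplit_or_isFused_or_isSClique [Nonempty V]
    (hK : (bellGraph G k).IsClique (K : Set _)) :
    IsCyclicTTriangleF G k K ∨ IsRadialTTriangleF G k K ∨ IsSplitTTetrahedronF G k K ∨
      IsFusedTTetrahedronF G k K ∨ IsSCliqueF G k K := by
  by_cases hS : IsSCliqueF G k K
  · exact Or.inr (Or.inr (Or.inr (Or.inr hS)))
  obtain ⟨A, hA, B, hB, C, hC, v₁, v₂, v₃, h⟩ := exists_isTTriangle hK hS
  have habc : ({A, B, C} : Finset _) ⊆ K := by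
    intro x; simp only [Finset.mem_insert, Finset.mem_singleton]; rintro (rfl | rfl | rfl) <;>
      assumption
  have h3 := (h.isTTriangleF (hK.subset (Finset.coe_subset.2 habc))).2.1
  rcases (h.card_le_four hK hA hB hC).lt_or_eq with h4 | h4
  · obtain rfl : {A, B, C} = K := Finset.eq_of_subset_of_card_le habc (by omega)
    exact (h.isCyclic_or_isRadial hK).imp_right Or.inl
  · have hD1 : (K \ {A, B, C}).card = 1 := by rw [Finset.card_sdiff_of_subset habc]; omega
    obtain ⟨D, hD⟩ := Finset.card_eq_one.1 hD1
    have hDK : D ∈ K \ {A, B, C} := hD ▸ Finset.mem_singleton_self D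
    simp only [Finset.mem_sdiff, Finset.mem_insert, Finset.mem_singleton, not_or] at hDK
    obtain rfl : K = {A, B, C, D} := by
      refine Finset.eq_of_subset_of_card_le (fun x hx => ?_) (h4 ▸ Finset.card_le_four)
      by_cases hx' : x ∈ ({A, B, C} : Finset _)
      · simp only [Finset.mem_insert, Finset.mem_singleton] at hx' ⊢; tauto
      · have : x ∈ K \ {A, B, C} := Finset.mem_sdiff.2 ⟨hx, hx'⟩
        rw [hD, Finset.mem_singleton] at this
        simp [this]
    exact Or.inr (Or.inr ((h.isSplit_or_isFused hK hDK.2.1 hDK.2.2.1 hDK.2.2.2).imp_right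
      Or.inl))

theorem not_isCyclicTTriangleF_and_isRadialTTriangleF :
    ¬(IsCyclicTTriangleF G k K ∧ IsRadialTTriangleF G k K) := by
  rintro ⟨⟨hT, A, B, C, rfl, v₁, v₂, v₃, -, -, -, e₃, e₁, e₂, m₁, m₂, m₃⟩,
    -, Q₁, Q₂, Q₃, hQ, w₁, w₂, w₃, g₁₂, g₁₃, g₂₃, f₃, f₁, f₂, mQ⟩
  have h := IsTTriangleF.isTTriangle hT e₃ e₁ e₂
  obtain ⟨hQ₁₂, hQ₁₃, hQ₂₃⟩ := Finset.ne_of_card_eq_three (hQ ▸ hT.2.1)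
  have hmem {X} (hX : X ∈ ({Q₁, Q₂, Q₃} : Finset _)) : X ∈ ({A, B, C} : Finset _) := hQ ▸ hX
  have hwv : ({w₁, w₂, w₃} : Finset V) = {v₁, v₂, v₃} := by
    refine Finset.eq_of_subset_of_card_le (fun x hx => ?_) ?_
    · simp only [Finset.mem_insert, Finset.mem_singleton] at hx
      rcases hx with rfl | rfl | rfl
      · exact h.mem_of_eraseVtx_eq (hmem (by simp)) (hmem (by simp)) hQ₂₃ f₁
      · exact h.mem_of_eraseVtx_eq (hmem (by simp)) (hmem (by simp)) hQ₁₃.symm f₂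
      · exact h.mem_of_eraseVtx_eq (hmem (by simp)) (hmem (by simp)) hQ₁₂ f₃
    · rw [Finset.card_eq_three.2 ⟨w₁, w₂, w₃, g₁₂, g₁₃, g₂₃, rfl⟩]
      exact Finset.card_le_three
  rw [hwv] at mQ
  have two_parts {P : {P : Multiset (Finset V) // IsStablePartition G k P}} {v : V}
      (hv : v ∈ ({v₁, v₂, v₃} : Finset V)) (hm : {v} ∈ P.1) (hP : {v₁, v₂, v₃} ∈ P.1) : False := by
    have hcard := Finset.card_eq_three.2 ⟨v₁, v₂, v₃, h.ne₁₂, h.ne₁₃, h.ne₂₃, rfl⟩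
    rw [eq_of_mem_of_mem P.2.2.1 hP hm hv (Finset.mem_singleton_self v),
      Finset.card_singleton] at hcard
    omega
  have hQ₁ := hmem (X := Q₁) (by simp)
  simp only [Finset.mem_insert, Finset.mem_singleton] at hQ₁
  rcases hQ₁ with rfl | rfl | rfl
  exacts [two_parts (by simp) m₁ mQ, two_parts (by simp) m₂ mQ, two_parts (by simp) m₃ mQ]

theorem IsSplitTTetrahedronF.not_isFusedTTetrahedronF (h : IsSplitTTetrahedronF G k K) :
    ¬IsFusedTTetrahedronF G k K := fun hF => by
  obtain ⟨-, h4, T, hTK, hT3, -, hS⟩ := h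
  obtain ⟨x, hx⟩ : T.Nonempty := Finset.card_pos.1 (by omega)
  have hne : K.erase x ≠ T := fun e => Finset.notMem_erase x K (e ▸ hx)
  have h3 : (K.erase x).card = 3 := by rw [Finset.card_erase_of_mem (hTK hx), h4]
  exact not_isSCliqueF_of_subset subset_rfl (hF.2.2 _ (Finset.erase_subset x K) h3)
    (hS _ (Finset.erase_subset x K) h3 hne)

theorem IsSplitTTetrahedronF.not_isSCliqueF (h : IsSplitTTetrahedronF G k K) :
    ¬IsSCliqueF G k K :=
  let ⟨_, _, _, hTK, _, hT, _⟩ := h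
  not_isSCliqueF_of_subset hTK hT

theorem IsFusedTTetrahedronF.not_isSCliqueF (h : IsFusedTTetrahedronF G k K) :
    ¬IsSCliqueF G k K := by
  obtain ⟨x, hx⟩ : K.Nonempty := Finset.card_pos.1 (by rw [h.2.1]; omega)
  exact not_isSCliqueF_of_subset (Finset.erase_subset x K)
    (h.2.2 _ (Finset.erase_subset x K) (by rw [Finset.card_erase_of_mem hx, h.2.1]))

end BellGraph

end BellColoring

open BellColoring in
theorem clique_classification [Nonempty V]
    (K : Finset {P : Multiset (Finset V) // IsStablePartition G k P})
    (hK : (bellGraph G k).IsClique (K : Set _)) :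
    (IsCyclicTTriangleF G k K ∨ IsRadialTTriangleF G k K ∨
      IsSplitTTetrahedronF G k K ∨ IsFusedTTetrahedronF G k K ∨ IsSCliqueF G k K) ∧
    ¬ (IsCyclicTTriangleF G k K ∧ IsRadialTTriangleF G k K) ∧
    ¬ (IsCyclicTTriangleF G k K ∧ IsSplitTTetrahedronF G k K) ∧
    ¬ (IsCyclicTTriangleF G k K ∧ IsFusedTTetrahedronF G k K) ∧
    ¬ (IsCyclicTTriangleF G k K ∧ IsSCliqueF G k K) ∧
    ¬ (IsRadialTTriangleF G k K ∧ IsSplitTTetrahedronF G k K) ∧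
    ¬ (IsRadialTTriangleF G k K ∧ IsFusedTTetrahedronF G k K) ∧
    ¬ (IsRadialTTriangleF G k K ∧ IsSCliqueF G k K) ∧
    ¬ (IsSplitTTetrahedronF G k K ∧ IsFusedTTetrahedronF G k K) ∧
    ¬ (IsSplitTTetrahedronF G k K ∧ IsSCliqueF G k K) ∧
    ¬ (IsFusedTTetrahedronF G k K ∧ IsSCliqueF G k K) := by
  have card_ne {p q : Prop} (hp : p → K.card = 3) (hq : q → K.card = 4) : ¬(p ∧ q) :=
    fun ⟨h₃, h₄⟩ => absurd ((hp h₃).symm.trans (hq h₄)) (by decide)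
  exact ⟨isCyclic_or_isRadial_or_isSplit_or_isFused_or_isSClique hK,
    not_isCyclicTTriangleF_and_isRadialTTriangleF,
    card_ne (·.1.2.1) (·.2.1), card_ne (·.1.2.1) (·.2.1),
    fun ⟨h, hS⟩ => not_isSCliqueF_of_subset subset_rfl h.1 hS,
    card_ne (·.1.2.1) (·.2.1), card_ne (·.1.2.1) (·.2.1),
    fun ⟨h, hS⟩ => not_isSCliqueF_of_subset subset_rfl h.1 hS,
    fun ⟨h, hF⟩ => h.not_isFusedTTetrahedronF hF,
    fun ⟨h, hS⟩ => h.not_isSCliqueF hS,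
    fun ⟨h, hS⟩ => h.not_isSCliqueF hS⟩
end

section
/- Let G be a finite triangle-free simple graph of order n and let k ∈ ℕ with k ≤ n. Then the matching reconfiguration graph M_k(G) is isomorphic to the Bell coloring graph B_{n−k}(Ḡ), where Ḡ is the complement of G. -/
open SimpleGraph

variable {V : Type*} [Fintype V] [DecidableEq V]

/-- `M` is a matching of `G`: a set of edges of `G` that are pairwise
vertex-disjoint. -/
def IsMatchingSet (G : SimpleGraph V) (M : Finset (Sym2 V)) : Prop :=
  (↑M : Set (Sym2 V)) ⊆ G.edgeSet ∧
    ∀ e ∈ M, ∀ f ∈ M, e ≠ f → ∀ x : V, x ∈ e → x ∉ f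

/-- The edges of the spanning subgraph `G⟨M⟩` remaining after deleting the
vertex `v`; equality of these sets for two matchings says exactly
`G⟨M₁⟩ − v = G⟨M₂⟩ − v`. -/
def matchDel (M : Finset (Sym2 V)) (v : V) : Set (Sym2 V) :=
  {e : Sym2 V | e ∈ M ∧ v ∉ e}

/-- The matching reconfiguration graph `M_k(G)`: vertices are the matchings of
`G` of size at least `k`, with distinct matchings `M₁, M₂` adjacent iff
`G⟨M₁⟩ − v = G⟨M₂⟩ − v` for some vertex `v`. -/
def matchingGraph (G : SimpleGraph V) (k : ℕ) :
    SimpleGraph {M : Finset (Sym2 V) // IsMatchingSet G M ∧ k ≤ M.card} where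
  Adj M N := M ≠ N ∧ ∃ v : V, matchDel M.1 v = matchDel N.1 v
  symm := by
    constructor
    rintro M N ⟨hne, v, hv⟩
    exact ⟨hne.symm, v, hv.symm⟩
  loopless := by
    constructor
    rintro M ⟨hne, _⟩
    exact hne rfl

/-!
A matching `M` of `G` with `#M = m ≥ k` yields a partition of `V` into the edges of `M`, the
singletons of unmatched vertices and `m - k` empty parts: `n - k` parts, all cliques of `G`, i.e.
stable sets of `Gᶜ`. As `G` is triangle-free, every stable set of `Gᶜ` has at most two vertices,
and a multiset of sets of size at most two is determined by its size, its elements and its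
two-element members. Hence the two-element parts recover the matching and the map is a bijection.
Deleting `v` keeps exactly the two-element parts avoiding `v`, i.e. the edges of `M - v`, and
leaves a partition of `V - v` into `n - k` parts; so `P - v = Q - v` iff `M - v = N - v`.
-/

section PartsOfCardAtMostTwo

variable {α : Type*} {P Q : Multiset (Finset α)}

lemma filter_card_two_add_filter_card_one_add_filter_card_zero (hP : ∀ s ∈ P, s.card ≤ 2) :
    P.filter (·.card = 2) + P.filter (·.card = 1) + P.filter (·.card = 0) = P := by
  classical
  ext s
  simp only [Multiset.count_add, Multiset.count_filter]
  by_cases hs : s ∈ P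
  · have := hP s hs
    rcases (by omega : s.card = 0 ∨ s.card = 1 ∨ s.card = 2) with h | h | h <;> simp [h]
  · simp [Multiset.count_eq_zero_of_notMem hs]

lemma map_singleton_sum_val_of_card_eq_one (hP : ∀ s ∈ P, s.card = 1) :
    (P.map Finset.val).sum.map ({·}) = P := by
  induction P using Multiset.induction_on with
  | empty => simp
  | cons s P ih =>
    obtain ⟨x, rfl⟩ := Finset.card_eq_one.mp (hP s (Multiset.mem_cons_self s P))
    simp [ih fun t ht => hP t (Multiset.mem_cons_of_mem ht)]

lemma filter_card_zero_eq_replicate (P : Multiset (Finset α)) :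
    P.filter (·.card = 0) = Multiset.replicate (P.filter (·.card = 0)).card ∅ :=
  Multiset.eq_replicate_card.mpr fun _ hs => Finset.card_eq_zero.mp (Multiset.mem_filter.mp hs).2

/-- The singletons are the elements outside the two-element members, and the empty sets make up
the size. -/
lemma eq_of_filter_card_two_eq (hP : ∀ s ∈ P, s.card ≤ 2) (hQ : ∀ s ∈ Q, s.card ≤ 2)
    (hcard : Multiset.card P = Multiset.card Q)
    (hsum : (P.map Finset.val).sum = (Q.map Finset.val).sum)
    (htwo : P.filter (·.card = 2) = Q.filter (·.card = 2)) : P = Q := by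
  have hP' := filter_card_two_add_filter_card_one_add_filter_card_zero hP
  have hQ' := filter_card_two_add_filter_card_one_add_filter_card_zero hQ
  rw [filter_card_zero_eq_replicate] at hP' hQ'
  have hone : P.filter (·.card = 1) = Q.filter (·.card = 1) := by
    rw [← hP', ← hQ'] at hsum
    simp only [Multiset.map_add, Multiset.sum_add, Multiset.map_replicate, Finset.empty_val,
      Multiset.sum_replicate, smul_zero, add_zero, htwo, add_right_inj] at hsum
    rw [← map_singleton_sum_val_of_card_eq_one (P := P.filter _)
        fun s hs => (Multiset.mem_filter.mp hs).2,
      ← map_singleton_sum_val_of_card_eq_one (P := Q.filter _)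
        fun s hs => (Multiset.mem_filter.mp hs).2, hsum]
  rw [← hP', ← hQ'] at hcard
  simp only [Multiset.card_add, Multiset.card_replicate, htwo, hone, add_right_inj] at hcard
  rw [← hP', ← hQ', htwo, hone, hcard]

lemma sum_card_le_card_add_card_filter_card_two (hP : ∀ s ∈ P, s.card ≤ 2) :
    (P.map Finset.card).sum ≤ Multiset.card P + Multiset.card (P.filter (·.card = 2)) := by
  induction P using Multiset.induction_on with
  | empty => simp
  | cons s P ih =>
    have hs := hP s (Multiset.mem_cons_self s P)
    have := ih fun t ht => hP t (Multiset.mem_cons_of_mem ht)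
    by_cases h2 : s.card = 2 <;> simp [h2] <;> omega

end PartsOfCardAtMostTwo

section EraseVtx

variable {α : Type*} [DecidableEq α] {P : Multiset (Finset α)}

lemma sum_map_val_eraseVtx (P : Multiset (Finset α)) (v : α) :
    ((eraseVtx P v).map Finset.val).sum = (P.map Finset.val).sum.filter (· ≠ v) := by
  change _ = Multiset.filter _ (Multiset.join _)
  rw [Multiset.filter_join, Multiset.map_map, eraseVtx, Multiset.map_map]
  exact congrArg Multiset.sum <| Multiset.map_congr rfl fun s _ => by
    simp [Finset.erase_val, s.nodup.erase_eq_filter]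

lemma filter_card_two_eraseVtx (hP : ∀ s ∈ P, s.card ≤ 2) (v : α) :
    (eraseVtx P v).filter (·.card = 2) = (P.filter (·.card = 2)).filter (v ∉ ·) := by
  rw [eraseVtx, Multiset.filter_map, Multiset.filter_filter]
  have hkeep :
      P.filter ((·.card = 2) ∘ (·.erase v)) = P.filter fun s => v ∉ s ∧ s.card = 2 :=
    Multiset.filter_congr fun s hs => by
      by_cases hv : v ∈ s
      · have := hP s hs
        simp [Finset.card_erase_of_mem hv, hv]
        omega
      · simp [hv]
  rw [hkeep]
  exact (Multiset.map_congr rfl fun s hs =>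
    Finset.erase_eq_of_notMem (Multiset.mem_filter.mp hs).2.1).trans (Multiset.map_id' _)

end EraseVtx

section DisjointParts

variable {α : Type*} [DecidableEq α] {P : Multiset (Finset α)} {s t : Finset α}

lemma disjoint_of_mem_erase (hP : (P.map Finset.val).sum.Nodup) (hs : s ∈ P)
    (ht : t ∈ P.erase s) : Disjoint s t := by
  obtain ⟨R, rfl⟩ := Multiset.exists_cons_of_mem hs
  rw [Multiset.erase_cons_head] at ht
  obtain ⟨R, rfl⟩ := Multiset.exists_cons_of_mem ht
  simp only [Multiset.map_cons, Multiset.sum_cons, Multiset.nodup_add] at hP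
  exact Finset.disjoint_val.mp (hP.2.2.mono_right (Multiset.le_add_right _ _))

lemma eq_of_mem_of_mem (hP : (P.map Finset.val).sum.Nodup) (hs : s ∈ P) (ht : t ∈ P)
    {x : α} (hxs : x ∈ s) (hxt : x ∈ t) : s = t := by
  by_contra hne
  exact Finset.disjoint_left.mp
    (disjoint_of_mem_erase hP hs ((Multiset.mem_erase_of_ne (Ne.symm hne)).mpr ht)) hxs hxt

lemma nodup_filter_of_nonempty (hP : (P.map Finset.val).sum.Nodup) {p : Finset α → Prop}
    [DecidablePred p] (hp : ∀ s, p s → s.Nonempty) : (P.filter p).Nodup := by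
  rw [Multiset.nodup_iff_count_le_one]
  intro s
  rw [Multiset.count_filter]
  split_ifs with hs
  · by_contra! htwice
    have hmem : s ∈ P.erase s := Multiset.count_pos.mp (by rw [Multiset.count_erase_self]; omega)
    obtain ⟨x, hx⟩ := hp s hs
    exact Finset.disjoint_left.mp
      (disjoint_of_mem_erase hP (Multiset.mem_of_mem_erase hmem) hmem) hx hx
  · exact zero_le_one

end DisjointParts

lemma SimpleGraph.forall_not_compl_adj_iff_isClique {α : Type*} {G : SimpleGraph α}
    {s : Finset α} : (∀ a ∈ s, ∀ b ∈ s, ¬ Gᶜ.Adj a b) ↔ G.IsClique (s : Set α) := by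
  simp [IsClique, Set.Pairwise, compl_adj, not_and, not_not]

lemma SimpleGraph.IsClique.card_le_two {α : Type*} {G : SimpleGraph α} {s : Finset α}
    (hs : G.IsClique (s : Set α)) (hG : G.CliqueFree 3) : s.card ≤ 2 := by
  by_contra! h
  obtain ⟨t, hts, ht⟩ := Finset.exists_subset_card_eq h
  exact hG t ⟨hs.subset hts, ht⟩

lemma Sym2.toFinset_injective {α : Type*} [DecidableEq α] :
    Function.Injective (Sym2.toFinset : Sym2 α → Finset α) :=
  fun _ _ h => Sym2.ext fun x => by rw [← Sym2.mem_toFinset, h, Sym2.mem_toFinset]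

lemma matchDel_eq_matchDel_iff {α : Type*} [DecidableEq α] {M N : Finset (Sym2 α)} {v : α} :
    matchDel M v = matchDel N v ↔ M.filter (v ∉ ·) = N.filter (v ∉ ·) := by
  rw [← Finset.coe_inj, Finset.coe_filter, Finset.coe_filter]
  rfl

section Matchings

variable {G : SimpleGraph V} {M N : Finset (Sym2 V)} {k : ℕ}

def unmatched (M : Finset (Sym2 V)) : Finset V := {w | ∀ e ∈ M, w ∉ e}

/-- The `#M - k` empty parts bring the number of parts up to `n - k`. -/
def matchingPartition (k : ℕ) (M : Finset (Sym2 V)) : Multiset (Finset V) :=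
  M.val.map Sym2.toFinset + (unmatched M).val.map ({·}) + Multiset.replicate (M.card - k) ∅

lemma IsMatchingSet.sum_add_unmatched (hM : IsMatchingSet G M) :
    (M.val.map fun e => e.toFinset.val).sum + (unmatched M).val = Finset.univ.val := by
  have hdisj : (M : Set (Sym2 V)).PairwiseDisjoint Sym2.toFinset := fun e he f hf hne =>
    Finset.disjoint_left.mpr fun x hxe hxf =>
      hM.2 e he f hf hne x (Sym2.mem_toFinset.mp hxe) (Sym2.mem_toFinset.mp hxf)
  have hunm : unmatched M = Finset.univ \ M.disjiUnion Sym2.toFinset hdisj := by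
    ext w
    simp [unmatched]
  have hval : (M.disjiUnion Sym2.toFinset hdisj).val = (M.val.map fun e => e.toFinset.val).sum :=
    rfl
  rw [hunm, Finset.sdiff_val, ← hval]
  exact add_tsub_cancel_of_le (Finset.val_le_iff.mpr (Finset.subset_univ _))

lemma IsMatchingSet.two_mul_card_add_card_unmatched (hM : IsMatchingSet G M) :
    2 * M.card + (unmatched M).card = Fintype.card V := by
  have h := congrArg Multiset.card hM.sum_add_unmatched
  rw [Multiset.card_add, ← Multiset.join, Multiset.card_join, Multiset.map_map,
    Multiset.map_congr (f := Multiset.card ∘ fun e : Sym2 V => e.toFinset.val) (g := fun _ => 2)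
      rfl fun e he => Sym2.card_toFinset_of_not_isDiag e (G.not_isDiag_of_mem_edgeSet (hM.1 he)),
    Multiset.map_const', Multiset.sum_replicate, smul_eq_mul] at h
  rw [mul_comm]
  exact h

lemma card_matchingPartition (hM : IsMatchingSet G M) (hk : k ≤ M.card) :
    Multiset.card (matchingPartition k M) = Fintype.card V - k := by
  have := hM.two_mul_card_add_card_unmatched
  simp only [matchingPartition, Multiset.card_add, Multiset.card_map, Multiset.card_replicate,
    Finset.card_val]
  omega

lemma sum_map_val_matchingPartition (hM : IsMatchingSet G M) :
    ((matchingPartition k M).map Finset.val).sum = Finset.univ.val := by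
  simp only [matchingPartition, Multiset.map_add, Multiset.sum_add, Multiset.map_map,
    Multiset.map_replicate, Finset.empty_val, Multiset.sum_replicate, smul_zero, add_zero]
  rw [← hM.sum_add_unmatched]
  exact congrArg _ (Multiset.sum_map_singleton _)

lemma card_le_two_of_mem_matchingPartition {s : Finset V} (hs : s ∈ matchingPartition k M) :
    s.card ≤ 2 := by
  simp only [matchingPartition, Multiset.mem_add, Multiset.mem_map] at hs
  rcases hs with (⟨e, -, rfl⟩ | ⟨w, -, rfl⟩) | hs
  · rw [Sym2.card_toFinset]; split_ifs <;> omega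
  · simp
  · simp [Multiset.eq_of_mem_replicate hs]

lemma isClique_of_mem_matchingPartition (hM : IsMatchingSet G M) {s : Finset V}
    (hs : s ∈ matchingPartition k M) : G.IsClique (s : Set V) := by
  simp only [matchingPartition, Multiset.mem_add, Multiset.mem_map] at hs
  rcases hs with (⟨e, he, rfl⟩ | ⟨w, -, rfl⟩) | hs
  · induction e with | _ a b =>
    rw [Sym2.toFinset_mk_eq, Finset.coe_pair]
    exact isClique_pair.mpr fun _ => hM.1 he
  · simp
  · simp [Multiset.eq_of_mem_replicate hs]

lemma isStablePartition_matchingPartition (hM : IsMatchingSet G M) (hk : k ≤ M.card) :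
    IsStablePartition Gᶜ (Fintype.card V - k) (matchingPartition k M) :=
  ⟨card_matchingPartition hM hk, sum_map_val_matchingPartition hM, fun _ hs =>
    forall_not_compl_adj_iff_isClique.mpr (isClique_of_mem_matchingPartition hM hs)⟩

lemma filter_card_two_matchingPartition (hM : IsMatchingSet G M) :
    (matchingPartition k M).filter (·.card = 2) = M.val.map Sym2.toFinset := by
  rw [matchingPartition, Multiset.filter_add, Multiset.filter_add, Multiset.filter_eq_self.mpr,
    Multiset.filter_eq_nil.mpr, Multiset.filter_eq_nil.mpr, add_zero, add_zero]
  · intro s hs; simp [Multiset.eq_of_mem_replicate hs]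
  · simp
  · simp only [Multiset.mem_map]
    rintro _ ⟨e, he, rfl⟩
    exact Sym2.card_toFinset_of_not_isDiag e (G.not_isDiag_of_mem_edgeSet (hM.1 he))

lemma filter_card_two_eraseVtx_matchingPartition (hM : IsMatchingSet G M) (v : V) :
    (eraseVtx (matchingPartition k M) v).filter (·.card = 2)
      = (M.filter (v ∉ ·)).val.map Sym2.toFinset := by
  rw [filter_card_two_eraseVtx (fun _ => card_le_two_of_mem_matchingPartition) v,
    filter_card_two_matchingPartition hM, Multiset.filter_map, Finset.filter_val]
  congr 1
  exact Multiset.filter_congr fun e _ => by simp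

lemma eraseVtx_matchingPartition_eq_iff (hM : IsMatchingSet G M) (hN : IsMatchingSet G N)
    (hkM : k ≤ M.card) (hkN : k ≤ N.card) (v : V) :
    eraseVtx (matchingPartition k M) v = eraseVtx (matchingPartition k N) v
      ↔ M.filter (v ∉ ·) = N.filter (v ∉ ·) := by
  constructor
  · intro h
    have h2 := congrArg (Multiset.filter (·.card = 2)) h
    rw [filter_card_two_eraseVtx_matchingPartition hM,
      filter_card_two_eraseVtx_matchingPartition hN] at h2
    exact Finset.val_injective (Multiset.map_injective Sym2.toFinset_injective h2)
  · intro h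
    have hle {L : Finset (Sym2 V)} :
        ∀ s ∈ eraseVtx (matchingPartition k L) v, s.card ≤ 2 := by
      simp only [eraseVtx, Multiset.mem_map]
      rintro _ ⟨s, hs, rfl⟩
      exact (Finset.card_erase_le).trans (card_le_two_of_mem_matchingPartition hs)
    refine eq_of_filter_card_two_eq hle hle ?_ ?_ ?_
    · simp only [eraseVtx, Multiset.card_map, card_matchingPartition hM hkM,
        card_matchingPartition hN hkN]
    · rw [sum_map_val_eraseVtx, sum_map_val_eraseVtx, sum_map_val_matchingPartition hM,
        sum_map_val_matchingPartition hN]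
    · rw [filter_card_two_eraseVtx_matchingPartition hM,
        filter_card_two_eraseVtx_matchingPartition hN, h]

def partitionMatching (P : Multiset (Finset V)) : Finset (Sym2 V) :=
  {e | ¬ e.IsDiag ∧ e.toFinset ∈ P}

lemma mem_partitionMatching {P : Multiset (Finset V)} {e : Sym2 V} :
    e ∈ partitionMatching P ↔ ¬ e.IsDiag ∧ e.toFinset ∈ P := by
  simp [partitionMatching]

lemma map_toFinset_partitionMatching_of_nodup {P : Multiset (Finset V)}
    (hP : (P.filter (·.card = 2)).Nodup) :
    (partitionMatching P).val.map Sym2.toFinset = P.filter (·.card = 2) := by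
  refine (Multiset.Nodup.ext ((partitionMatching P).nodup.map Sym2.toFinset_injective) hP).mpr
    fun s => ?_
  simp only [Multiset.mem_map, Multiset.mem_filter, Finset.mem_val, mem_partitionMatching]
  constructor
  · rintro ⟨e, ⟨hd, he⟩, rfl⟩
    exact ⟨he, Sym2.card_toFinset_of_not_isDiag e hd⟩
  · rintro ⟨hs, h2⟩
    obtain ⟨x, y, hxy, rfl⟩ := Finset.card_eq_two.mp h2
    exact ⟨s(x, y), ⟨Sym2.mk_isDiag_iff.not.mpr hxy, by rwa [Sym2.toFinset_mk_eq]⟩,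
      Sym2.toFinset_mk_eq⟩

lemma partitionMatching_matchingPartition (hM : IsMatchingSet G M) :
    partitionMatching (matchingPartition k M) = M := by
  have hnodup := M.nodup.map (Sym2.toFinset_injective (α := V))
  rw [← filter_card_two_matchingPartition (k := k) hM] at hnodup
  apply Finset.val_injective
  apply Multiset.map_injective Sym2.toFinset_injective
  rw [map_toFinset_partitionMatching_of_nodup hnodup, filter_card_two_matchingPartition hM]

end Matchings

namespace IsStablePartition

variable {G : SimpleGraph V} {m : ℕ} {P : Multiset (Finset V)}

lemma isMatchingSet_partitionMatching (hP : IsStablePartition Gᶜ m P) :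
    IsMatchingSet G (partitionMatching P) := by
  refine ⟨fun e he => ?_, fun e he f hf hne x hxe hxf => hne ?_⟩
  · obtain ⟨hd, he⟩ := mem_partitionMatching.mp he
    induction e with | _ a b =>
    have := forall_not_compl_adj_iff_isClique.mp (hP.2.2 _ he)
    rw [Sym2.toFinset_mk_eq, Finset.coe_pair] at this
    exact isClique_pair.mp this (Sym2.mk_isDiag_iff.not.mp hd)
  · exact Sym2.toFinset_injective (eq_of_mem_of_mem (hP.2.1 ▸ Finset.univ.nodup)
      (mem_partitionMatching.mp he).2 (mem_partitionMatching.mp hf).2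
      (Sym2.mem_toFinset.mpr hxe) (Sym2.mem_toFinset.mpr hxf))

lemma map_toFinset_partitionMatching (hP : IsStablePartition G m P) :
    (partitionMatching P).val.map Sym2.toFinset = P.filter (·.card = 2) :=
  map_toFinset_partitionMatching_of_nodup <| nodup_filter_of_nonempty
    (hP.2.1 ▸ Finset.univ.nodup) fun _ h => Finset.card_pos.mp (by omega)

lemma le_card_partitionMatching {k : ℕ} (hG : G.CliqueFree 3)
    (hP : IsStablePartition Gᶜ (Fintype.card V - k) P) (hk : k ≤ Fintype.card V) :
    k ≤ (partitionMatching P).card := by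
  have hsum : (P.map Finset.card).sum = Fintype.card V := by
    rw [← Finset.card_univ, ← Finset.card_val, ← hP.2.1, ← Multiset.join,
      Multiset.card_join, Multiset.map_map]
    rfl
  have hle := sum_card_le_card_add_card_filter_card_two fun s hs =>
    (forall_not_compl_adj_iff_isClique.mp (hP.2.2 s hs)).card_le_two hG
  rw [hsum, hP.1, ← hP.map_toFinset_partitionMatching, Multiset.card_map] at hle
  change _ ≤ _ + (partitionMatching P).card at hle
  omega

lemma matchingPartition_partitionMatching {k : ℕ} (hG : G.CliqueFree 3)
    (hP : IsStablePartition Gᶜ (Fintype.card V - k) P) (hk : k ≤ Fintype.card V) :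
    matchingPartition k (partitionMatching P) = P := by
  have hM := hP.isMatchingSet_partitionMatching
  refine eq_of_filter_card_two_eq (fun _ => card_le_two_of_mem_matchingPartition)
    (fun s hs => (forall_not_compl_adj_iff_isClique.mp (hP.2.2 s hs)).card_le_two hG) ?_ ?_ ?_
  · rw [card_matchingPartition hM (hP.le_card_partitionMatching hG hk), hP.1]
  · rw [sum_map_val_matchingPartition hM, hP.2.1]
  · rw [filter_card_two_matchingPartition hM, hP.map_toFinset_partitionMatching]

end IsStablePartition

section Isomorphism

variable {G : SimpleGraph V} {k : ℕ}

def matchingEquivStablePartition (hG : G.CliqueFree 3) (hk : k ≤ Fintype.card V) :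
    {M : Finset (Sym2 V) // IsMatchingSet G M ∧ k ≤ M.card}
      ≃ {P : Multiset (Finset V) // IsStablePartition Gᶜ (Fintype.card V - k) P} where
  toFun M := ⟨matchingPartition k M, isStablePartition_matchingPartition M.2.1 M.2.2⟩
  invFun P := ⟨partitionMatching P, P.2.isMatchingSet_partitionMatching,
    P.2.le_card_partitionMatching hG hk⟩
  left_inv M := Subtype.ext (partitionMatching_matchingPartition M.2.1)
  right_inv P := Subtype.ext (P.2.matchingPartition_partitionMatching hG hk)

def matchingGraphIsoBellGraph (hG : G.CliqueFree 3) (hk : k ≤ Fintype.card V) :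
    matchingGraph G k ≃g bellGraph Gᶜ (Fintype.card V - k) where
  toEquiv := matchingEquivStablePartition hG hk
  map_rel_iff' {M N} := and_congr (matchingEquivStablePartition hG hk).injective.ne_iff <|
    exists_congr fun v => (eraseVtx_matchingPartition_eq_iff M.2.1 N.2.1 M.2.2 N.2.2 v).trans
      matchDel_eq_matchDel_iff.symm

end Isomorphism

/-- **Matching graphs are Bell coloring graphs.** If `G` is a triangle-free
graph of order `n` and `k ≤ n`, then `M_k(G) ≅ B_{n−k}(Ḡ)`. -/
theorem matchingGraph_iso_bellGraph (G : SimpleGraph V) (hG : G.CliqueFree 3)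
    (n k : ℕ) (hn : Fintype.card V = n) (hk : k ≤ n) :
    Nonempty (matchingGraph G k ≃g bellGraph Gᶜ (n - k)) := by
  subst hn
  exact ⟨matchingGraphIsoBellGraph hG hk⟩
end

section
/- Let G be a finite simple graph of order 2k + 1 and let M_1 ≠ M_2 be near-perfect matchings of G, with v the unmatched vertex of M_1 and u the unmatched vertex of M_2. Then the following are equivalent: (1) there exists w ∈ V(G) with G⟨M_1⟩ − w = G⟨M_2⟩ − w; (2) there exists w ∈ V(G) with M_1 = (M_2 \ {vw}) ∪ {uw}; (3) there exists w ∈ V(G) with uw ∈ M_1, vw ∈ M_2, and G⟨M_1⟩ − u − v − w = G⟨M_2⟩ − u − v − w. -/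
open SimpleGraph

variable {V : Type*} [Fintype V] [DecidableEq V]

/-
If `G⟨M₁⟩ − w = G⟨M₂⟩ − w` with `M₁ ≠ M₂`, then `w` is neither unmatched vertex, so it lies on
edges `e₁ ∈ M₁` and `e₂ ∈ M₂`, and `M₁ \ {e₁} = M₂ \ {e₂}`. A near-perfect matching covers every
vertex except its unmatched one. The other endpoint of `e₁` is covered by no edge of
`M₁ \ {e₁} = M₂ \ {e₂}`, so if `M₂` covered it, it would do so by `e₂`, forcing `e₁ = e₂`;
hence it is `u`, i.e. `e₁ = uw`, and symmetrically `e₂ = vw`. This gives (2) and (3), and each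
of them shows directly that `M₁` and `M₂` agree away from `w`.
-/

section

variable {α : Type*} {G : SimpleGraph α} {M M₁ M₂ : Finset (Sym2 α)}

lemma subset_of_matchDel_eq {w : α} (h : matchDel M₁ w = matchDel M₂ w)
    (hw : ∀ e ∈ M₁, w ∉ e) : M₁ ⊆ M₂ := fun e he =>
  (h ▸ (⟨he, hw e he⟩ : e ∈ matchDel M₁ w) : e ∈ matchDel M₂ w).1

lemma matchDel_eq_setOf {u v w : α} (hu : ∀ e ∈ M, w ∉ e → u ∉ e)
    (hv : ∀ e ∈ M, w ∉ e → v ∉ e) :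
    matchDel M w = {e | e ∈ M ∧ u ∉ e ∧ v ∉ e ∧ w ∉ e} := by
  ext e
  exact ⟨fun ⟨he, hw⟩ => ⟨he, hu e he hw, hv e he hw, hw⟩, fun ⟨he, _, _, hw⟩ => ⟨he, hw⟩⟩

lemma matchDel_insert_erase [DecidableEq α] {e f : Sym2 α} {w : α} (he : w ∈ e) (hf : w ∈ f) :
    matchDel (insert e (M.erase f)) w = matchDel M w := by
  ext g
  simp only [matchDel, Set.mem_ofPred_eq, Finset.mem_insert, Finset.mem_erase]
  constructor
  · rintro ⟨rfl | ⟨-, hg⟩, hwg⟩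
    exacts [absurd he hwg, ⟨hg, hwg⟩]
  · rintro ⟨hg, hwg⟩
    exact ⟨Or.inr ⟨fun h => hwg (h ▸ hf), hg⟩, hwg⟩

lemma setOf_eq_of_erase_eq [DecidableEq α] {u v w : α}
    (h : M₁.erase s(u, w) = M₂.erase s(v, w)) :
    {e | e ∈ M₁ ∧ u ∉ e ∧ v ∉ e ∧ w ∉ e} = {e | e ∈ M₂ ∧ u ∉ e ∧ v ∉ e ∧ w ∉ e} := by
  ext e
  simp only [Set.mem_ofPred_eq, and_congr_left_iff]
  rintro ⟨hu, hv, -⟩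
  have hue : e ≠ s(u, w) := fun h => hu (h ▸ Sym2.mem_mk_left u w)
  have hve : e ≠ s(v, w) := fun h => hv (h ▸ Sym2.mem_mk_left v w)
  calc e ∈ M₁ ↔ e ∈ M₁.erase s(u, w) := by rw [Finset.mem_erase, and_iff_right hue]
    _ ↔ e ∈ M₂ := by rw [h, Finset.mem_erase, and_iff_right hve]

namespace IsMatchingSet

lemma eq_of_mem_of_mem (hM : IsMatchingSet G M) {e f : Sym2 α} {x : α} (he : e ∈ M)
    (hf : f ∈ M) (hxe : x ∈ e) (hxf : x ∈ f) : e = f :=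
  by_contra fun hne => hM.2 e he f hf hne x hxe hxf

lemma notMem_of_mk_mem (hM : IsMatchingSet G M) {x w : α} {e : Sym2 α}
    (hxw : s(x, w) ∈ M) (he : e ∈ M) (hwe : w ∉ e) : x ∉ e := fun hxe =>
  hwe (hM.eq_of_mem_of_mem hxw he (Sym2.mem_mk_left x w) hxe ▸ Sym2.mem_mk_right x w)

lemma coe_erase_eq_matchDel [DecidableEq α] (hM : IsMatchingSet G M) {e : Sym2 α} {w : α}
    (he : e ∈ M) (hw : w ∈ e) : ↑(M.erase e) = matchDel M w := by
  ext f
  simp only [Finset.coe_erase, Set.mem_sdiff, Finset.mem_coe, Set.mem_singleton_iff, matchDel,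
    Set.mem_ofPred_eq]
  exact ⟨fun ⟨hf, hfe⟩ => ⟨hf, fun hwf => hfe (hM.eq_of_mem_of_mem hf he hwf hw)⟩,
    fun ⟨hf, hwf⟩ => ⟨hf, fun h => hwf (h ▸ hw)⟩⟩

lemma exists_mem_of_ne [Fintype α] [DecidableEq α] (hM : IsMatchingSet G M)
    (hcard : Fintype.card α = 2 * M.card + 1) {v : α} (hv : ∀ e ∈ M, v ∉ e) {x : α}
    (hx : x ≠ v) : ∃ e ∈ M, x ∈ e := by
  have hcovered : (M.biUnion Sym2.toFinset).card = 2 * M.card := by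
    rw [Finset.card_biUnion, Finset.sum_const_nat, mul_comm]
    · exact fun e he =>
        Sym2.card_toFinset_of_not_isDiag e (G.not_isDiag_of_mem_edgeSet (hM.1 he))
    · exact fun e he f hf hef => Finset.disjoint_left.2 fun x hxe hxf =>
        hM.2 e he f hf hef x (Sym2.mem_toFinset.1 hxe) (Sym2.mem_toFinset.1 hxf)
  have hsub : M.biUnion Sym2.toFinset ⊆ Finset.univ.erase v := fun y hy => by
    obtain ⟨e, he, hye⟩ := Finset.mem_biUnion.1 hy
    exact Finset.mem_erase.2 ⟨fun h => hv e he (h ▸ Sym2.mem_toFinset.1 hye), Finset.mem_univ y⟩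
  have heq : M.biUnion Sym2.toFinset = Finset.univ.erase v := by
    refine Finset.eq_of_subset_of_card_le hsub ?_
    rw [Finset.card_erase_of_mem (Finset.mem_univ v), Finset.card_univ, hcard, hcovered]
    omega
  obtain ⟨e, he, hxe⟩ := Finset.mem_biUnion.1 (heq ▸ Finset.mem_erase.2 ⟨hx, Finset.mem_univ x⟩)
  exact ⟨e, he, Sym2.mem_toFinset.1 hxe⟩

lemma eq_mk_of_erase_eq [DecidableEq α] (hM₁ : IsMatchingSet G M₁) {e₁ e₂ : Sym2 α} {u w : α}
    (h : M₁.erase e₁ = M₂.erase e₂) (he₁ : e₁ ∈ M₁) (hne : e₁ ≠ e₂) (hw₁ : w ∈ e₁)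
    (hw₂ : w ∈ e₂) (hcover : ∀ x ≠ u, ∃ f ∈ M₂, x ∈ f) : e₁ = s(u, w) := by
  obtain ⟨a, rfl⟩ := Sym2.mem_iff_exists.1 hw₁
  have haw : w ≠ a := fun h =>
    G.not_isDiag_of_mem_edgeSet (hM₁.1 he₁) (Sym2.mk_isDiag_iff.2 h)
  rw [Sym2.eq_swap, Sym2.congr_left]
  by_contra hau
  obtain ⟨f, hf, haf⟩ := hcover a hau
  have hfe₂ : f = e₂ := by
    by_contra hfe₂
    have hf₁ : f ∈ M₁.erase s(w, a) := h ▸ Finset.mem_erase_of_ne_of_mem hfe₂ hf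
    exact Finset.ne_of_mem_erase hf₁
      (hM₁.eq_of_mem_of_mem (Finset.mem_of_mem_erase hf₁) he₁ haf (Sym2.mem_mk_right w a))
  exact hne (Sym2.eq_of_ne_mem haw (Sym2.mem_mk_left w a) (Sym2.mem_mk_right w a) hw₂
    (hfe₂ ▸ haf))

lemma mk_mem_of_matchDel_eq [Fintype α] [DecidableEq α] (hM₁ : IsMatchingSet G M₁)
    (hM₂ : IsMatchingSet G M₂) (hcard : Fintype.card α = 2 * M₁.card + 1)
    (hc : M₁.card = M₂.card) (hne : M₁ ≠ M₂) {u v w : α} (hv : ∀ e ∈ M₁, v ∉ e)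
    (hu : ∀ e ∈ M₂, u ∉ e) (h : matchDel M₁ w = matchDel M₂ w) :
    s(u, w) ∈ M₁ ∧ s(v, w) ∈ M₂ ∧ M₁.erase s(u, w) = M₂.erase s(v, w) := by
  have hcover₁ : ∀ x ≠ v, ∃ e ∈ M₁, x ∈ e := fun _ => hM₁.exists_mem_of_ne hcard hv
  have hcover₂ : ∀ x ≠ u, ∃ e ∈ M₂, x ∈ e := fun _ => hM₂.exists_mem_of_ne (hc ▸ hcard) hu
  have hwv : w ≠ v := by
    rintro rfl
    exact hne (Finset.eq_of_subset_of_card_le (subset_of_matchDel_eq h hv) hc.ge)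
  have hwu : w ≠ u := by
    rintro rfl
    exact hne (Finset.eq_of_subset_of_card_le (subset_of_matchDel_eq h.symm hu) hc.le).symm
  obtain ⟨e₁, he₁, hw₁⟩ := hcover₁ w hwv
  obtain ⟨e₂, he₂, hw₂⟩ := hcover₂ w hwu
  have herase : M₁.erase e₁ = M₂.erase e₂ := Finset.coe_injective <| by
    rw [hM₁.coe_erase_eq_matchDel he₁ hw₁, hM₂.coe_erase_eq_matchDel he₂ hw₂, h]
  have hne' : e₁ ≠ e₂ := by
    rintro rfl
    refine hne ?_
    calc M₁ = insert e₁ (M₁.erase e₁) := (Finset.insert_erase he₁).symm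
      _ = insert e₁ (M₂.erase e₁) := by rw [herase]
      _ = M₂ := Finset.insert_erase he₂
  obtain rfl := hM₁.eq_mk_of_erase_eq herase he₁ hne' hw₁ hw₂ hcover₂
  obtain rfl := hM₂.eq_mk_of_erase_eq herase.symm he₂ hne'.symm hw₂ hw₁ hcover₁
  exact ⟨he₁, he₂, herase⟩

end IsMatchingSet

end

/-- **Adjacency of near-perfect matchings.** Let `G` have order `2k + 1`, and
let `M₁ ≠ M₂` be near-perfect matchings of `G` (matchings of size `k`), with
`v` the unmatched vertex of `M₁` and `u` the unmatched vertex of `M₂`. The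
following are equivalent:
(1) `G⟨M₁⟩ − w = G⟨M₂⟩ − w` for some `w`;
(2) `M₁ = (M₂ \ {vw}) ∪ {uw}` for some `w`;
(3) `uw ∈ M₁`, `vw ∈ M₂` and `G⟨M₁⟩ − u − v − w = G⟨M₂⟩ − u − v − w` for some `w`. -/
theorem nearPerfect_adjacency (G : SimpleGraph V) (k : ℕ)
    (hcard : Fintype.card V = 2 * k + 1)
    (M₁ M₂ : Finset (Sym2 V)) (hM₁ : IsMatchingSet G M₁) (hM₂ : IsMatchingSet G M₂)
    (hc₁ : M₁.card = k) (hc₂ : M₂.card = k) (hne : M₁ ≠ M₂)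
    (v u : V) (hv : ∀ e ∈ M₁, v ∉ e) (hu : ∀ e ∈ M₂, u ∉ e) :
    ((∃ w : V, matchDel M₁ w = matchDel M₂ w) ↔
      (∃ w : V, M₁ = insert s(u, w) (M₂.erase s(v, w)))) ∧
    ((∃ w : V, matchDel M₁ w = matchDel M₂ w) ↔
      (∃ w : V, s(u, w) ∈ M₁ ∧ s(v, w) ∈ M₂ ∧
        {e : Sym2 V | e ∈ M₁ ∧ u ∉ e ∧ v ∉ e ∧ w ∉ e} =
          {e : Sym2 V | e ∈ M₂ ∧ u ∉ e ∧ v ∉ e ∧ w ∉ e})) := by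
  have key (w : V) (h : matchDel M₁ w = matchDel M₂ w) :=
    hM₁.mk_mem_of_matchDel_eq hM₂ (by rw [hcard, hc₁]) (hc₁.trans hc₂.symm) hne hv hu h
  refine ⟨⟨fun ⟨w, hw⟩ => ?_, fun ⟨w, hw⟩ => ?_⟩,
    ⟨fun ⟨w, hw⟩ => ?_, fun ⟨w, hu₁, hv₂, hw⟩ => ?_⟩⟩
  · obtain ⟨hu₁, -, herase⟩ := key w hw
    exact ⟨w, by rw [← herase, Finset.insert_erase hu₁]⟩
  · exact ⟨w, hw ▸ matchDel_insert_erase (Sym2.mem_mk_right u w) (Sym2.mem_mk_right v w)⟩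
  · obtain ⟨hu₁, hv₂, herase⟩ := key w hw
    exact ⟨w, hu₁, hv₂, setOf_eq_of_erase_eq herase⟩
  · refine ⟨w, ?_⟩
    rw [matchDel_eq_setOf (fun e he => hM₁.notMem_of_mk_mem hu₁ he) (fun e he _ => hv e he), hw,
      ← matchDel_eq_setOf (fun e he _ => hu e he) (fun e he => hM₂.notMem_of_mk_mem hv₂ he)]
end

section
/- For i = 1, 2, let H_i be a finite simple graph of odd order with a uniquely unmatched vertex v_i (i.e., H_i − v_i has a unique perfect matching), let k_i = (|V(H_i)| − 1)/2, and let M_{v_i} be the unique near-perfect matching of H_i leaving v_i unmatched. Let G be the graph obtained from the disjoint union H_1 ⊔ H_2 by identifying v_1 with v_2. Then the near-perfect matching graph M_{k_1 + k_2}(G) is isomorphic to the graph obtained from the disjoint union M_{k_1}(H_1) ⊔ M_{k_2}(H_2) by identifying the vertex M_{v_1} with the vertex M_{v_2}. -/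
open SimpleGraph

variable {V : Type*} [Fintype V] [DecidableEq V]

/-- The graph `(A ⊔ B)/(a ∼ b)` obtained from the disjoint union of `A` and
`B` by identifying the vertex `a` of `A` with the vertex `b` of `B`.  Its
vertex type is `V₁ ⊕ {x : V₂ // x ≠ b}`, where `Sum.inl a` plays the role of
the identified vertex. -/
def glueAt {V₁ V₂ : Type*} (A : SimpleGraph V₁) (B : SimpleGraph V₂) (a : V₁) (b : V₂) :
    SimpleGraph (V₁ ⊕ {x : V₂ // x ≠ b}) where
  Adj x y :=
    match x, y with
    | Sum.inl x₁, Sum.inl y₁ => A.Adj x₁ y₁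
    | Sum.inl x₁, Sum.inr y₂ => x₁ = a ∧ B.Adj b y₂.1
    | Sum.inr x₂, Sum.inl y₁ => y₁ = a ∧ B.Adj b x₂.1
    | Sum.inr x₂, Sum.inr y₂ => B.Adj x₂.1 y₂.1
  symm := by
    constructor
    rintro (x | x) (y | y) h
    · exact h.symm
    · exact h
    · exact h
    · exact h.symm
  loopless := by
    constructor
    rintro (x | x) h
    · exact A.irrefl h
    · exact B.irrefl h

/-!
A matching of `(H₁ ⊔ H₂)/(v₁ ∼ v₂)` is the union of a matching `M₁` of `H₁` and a matching `M₂`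
of `H₂` that do not both cover the glued vertex. As `|Mᵢ| ≤ kᵢ`, it is near-perfect iff both
parts are, and then `M₁ = M_{v₁}` or `M₂ = M_{v₂}`, since one of them misses `vᵢ`. So the
near-perfect matchings are the points of the two axes through `(M_{v₁}, M_{v₂})` in
`M_{k₁}(H₁) × M_{k₂}(H₂)`, and the wedge of two graphs is the subgraph of their box product
induced on such a pair of axes.

Adjacency `G⟨M⟩ − w = G⟨N⟩ − w` says that all edges of `M ∆ N` pass through `w`. This splits
into the same condition on one side with equality on the other, except when both parts change
only at the glued vertex; that is impossible, as the part equal to `M_{vᵢ}` misses `vᵢ`, and a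
near-perfect matching differing from it only at `vᵢ` contains it.
-/

open scoped symmDiff

lemma Sym2.apply_mem_map_iff {α β : Type*} {f : α → β} (hf : Function.Injective f) {a : α}
    {z : Sym2 α} : f a ∈ z.map f ↔ a ∈ z :=
  ⟨fun h => by obtain ⟨b, hb, hba⟩ := Sym2.mem_map.1 h; exact hf hba ▸ hb,
    fun h => Sym2.mem_map.2 ⟨a, h, rfl⟩⟩

section Matching

variable {α β : Type*}

def IsStar (D : Finset (Sym2 α)) : Prop :=
  ∃ v, ∀ e ∈ D, v ∈ e

lemma isStar_image_iff [Nonempty α] [DecidableEq β] {f : α → β} (hf : Function.Injective f)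
    {D : Finset (Sym2 α)} : IsStar (D.image (Sym2.map f)) ↔ IsStar D := by
  simp only [IsStar, Finset.forall_mem_image]
  refine ⟨fun ⟨w, hw⟩ => ?_,
    fun ⟨a, ha⟩ => ⟨f a, fun e he => (Sym2.apply_mem_map_iff hf).2 (ha e he)⟩⟩
  obtain hD | ⟨e₀, he₀⟩ := D.eq_empty_or_nonempty
  · exact ⟨Classical.arbitrary α, by simp [hD]⟩
  obtain ⟨a, -, rfl⟩ := Sym2.mem_map.1 (hw he₀)
  exact ⟨a, fun e he => (Sym2.apply_mem_map_iff hf).1 (hw he)⟩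

variable {G : SimpleGraph α} {M N : Finset (Sym2 α)}

lemma IsMatchingSet.not_isDiag (hM : IsMatchingSet G M) {e : Sym2 α} (he : e ∈ M) :
    ¬ e.IsDiag :=
  G.not_isDiag_of_mem_edgeSet (hM.1 he)

lemma IsMatchingSet.two_mul_card_le [Fintype α] [DecidableEq α] (hM : IsMatchingSet G M) :
    2 * M.card ≤ Fintype.card α := by
  have hdisj : (M : Set (Sym2 α)).PairwiseDisjoint Sym2.toFinset := fun e he f hf hef =>
    Finset.disjoint_left.2 fun x hxe hxf =>
      hM.2 e he f hf hef x (Sym2.mem_toFinset.1 hxe) (Sym2.mem_toFinset.1 hxf)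
  calc 2 * M.card = ∑ e ∈ M, e.toFinset.card := by
        rw [Finset.sum_congr rfl fun e he => Sym2.card_toFinset_of_not_isDiag e (hM.not_isDiag he),
          Finset.sum_const, smul_eq_mul, mul_comm]
    _ = (M.biUnion Sym2.toFinset).card := (Finset.card_biUnion hdisj).symm
    _ ≤ Fintype.card α := Finset.card_le_univ _

lemma IsMatchingSet.card_le [Fintype α] [DecidableEq α] {k : ℕ} (hM : IsMatchingSet G M)
    (hα : Fintype.card α = 2 * k + 1) : M.card ≤ k := by
  have := hM.two_mul_card_le
  omega

lemma matchDel_eq_iff [DecidableEq α] {v : α} :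
    matchDel M v = matchDel N v ↔ ∀ e ∈ M ∆ N, v ∈ e := by
  simp only [Set.ext_iff, matchDel, Set.mem_ofPred_eq, Finset.mem_symmDiff]
  exact forall_congr' fun e => by tauto

lemma matchingGraph_adj_iff [DecidableEq α] {k : ℕ} {M N : {M // IsMatchingSet G M ∧ k ≤ M.card}} :
    (matchingGraph G k).Adj M N ↔ M.1 ≠ N.1 ∧ IsStar (M.1 ∆ N.1) := by
  simp only [matchingGraph, matchDel_eq_iff, ne_eq, Subtype.ext_iff, IsStar]

lemma eq_of_forall_mem_symmDiff [DecidableEq α] {v : α} (hN : ∀ e ∈ N, v ∉ e)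
    (hcard : M.card ≤ N.card) (h : ∀ e ∈ M ∆ N, v ∈ e) : M = N := by
  refine (Finset.eq_of_subset_of_card_le (fun e he => ?_) hcard).symm
  by_contra heM
  exact hN e he (h e (Finset.mem_symmDiff.2 (Or.inr ⟨he, heM⟩)))

end Matching

structure IsUniquelyUnmatched {α : Type*} [Fintype α] (H : SimpleGraph α) (k : ℕ) (v : α)
    (Mv : Finset (Sym2 α)) : Prop where
  card_eq : Fintype.card α = 2 * k + 1
  isMatchingSet : IsMatchingSet H Mv
  card_matching : Mv.card = k
  not_mem : ∀ e ∈ Mv, v ∉ e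
  eq_of_not_mem : ∀ M, IsMatchingSet H M → M.card = k → (∀ e ∈ M, v ∉ e) → M = Mv

section Wedge

variable {α β : Type*} [DecidableEq β]

def wedgeEquivAxes (a : α) (b : β) :
    α ⊕ {y // y ≠ b} ≃ {p : α × β // p.1 = a ∨ p.2 = b} where
  toFun := Sum.elim (fun x => ⟨(x, b), Or.inr rfl⟩) (fun y => ⟨(a, y), Or.inl rfl⟩)
  invFun p := if h : p.1.2 = b then .inl p.1.1 else .inr ⟨p.1.2, h⟩
  left_inv := by rintro (x | ⟨y, hy⟩) <;> simp_all
  right_inv := by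
    rintro ⟨⟨x, y⟩, rfl | rfl⟩
    · by_cases hy : y = b <;> simp [hy]
    · simp

def glueAtIsoInduceBoxProd (A : SimpleGraph α) (B : SimpleGraph β) (a : α) (b : β) :
    glueAt A B a b ≃g (A □ B).induce {p | p.1 = a ∨ p.2 = b} where
  toEquiv := wedgeEquivAxes a b
  map_rel_iff' := by
    rintro (x | ⟨y, hy⟩) (x' | ⟨y', hy'⟩)
    · simp [wedgeEquivAxes, glueAt, boxProd_adj]
    · simp [wedgeEquivAxes, glueAt, boxProd_adj, hy'.symm, and_comm]
    · simp [wedgeEquivAxes, glueAt, boxProd_adj, hy, B.adj_comm y, eq_comm, and_comm]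
    · simp [wedgeEquivAxes, glueAt, boxProd_adj]

end Wedge

section Glue

variable {V₁ V₂ : Type*} {v₁ : V₁} {v₂ : V₂} {H₁ : SimpleGraph V₁} {H₂ : SimpleGraph V₂}
variable {M N : Finset (Sym2 (V₁ ⊕ {y : V₂ // y ≠ v₂}))} {M₁ : Finset (Sym2 V₁)}
  {M₂ : Finset (Sym2 V₂)}

lemma map_inl_mem_edgeSet_glueAt {e : Sym2 V₁} :
    e.map Sum.inl ∈ (glueAt H₁ H₂ v₁ v₂).edgeSet ↔ e ∈ H₁.edgeSet := by
  induction e using Sym2.ind with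
  | _ a b => rfl

noncomputable def leftPart (M : Finset (Sym2 (V₁ ⊕ {y : V₂ // y ≠ v₂}))) : Finset (Sym2 V₁) :=
  M.preimage (Sym2.map Sum.inl) (Sym2.map.injective Sum.inl_injective).injOn

@[simp] lemma mem_leftPart {e : Sym2 V₁} : e ∈ leftPart M ↔ e.map Sum.inl ∈ M :=
  Finset.mem_preimage

lemma isMatchingSet_leftPart (hM : IsMatchingSet (glueAt H₁ H₂ v₁ v₂) M) :
    IsMatchingSet H₁ (leftPart M) := by
  refine ⟨fun e he => map_inl_mem_edgeSet_glueAt.1 (hM.1 (mem_leftPart.1 he)), ?_⟩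
  intro e he f hf hef a hae haf
  exact hM.2 _ (mem_leftPart.1 he) _ (mem_leftPart.1 hf)
    ((Sym2.map.injective Sum.inl_injective).ne hef) (.inl a)
    ((Sym2.apply_mem_map_iff Sum.inl_injective).2 hae)
    ((Sym2.apply_mem_map_iff Sum.inl_injective).2 haf)

variable [DecidableEq V₂]

variable (v₁ v₂) in
def glueRight (y : V₂) : V₁ ⊕ {y : V₂ // y ≠ v₂} :=
  if h : y = v₂ then .inl v₁ else .inr ⟨y, h⟩

@[simp] lemma glueRight_self : glueRight v₁ v₂ v₂ = .inl v₁ := dif_pos rfl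

lemma glueRight_coe (y : {y : V₂ // y ≠ v₂}) : glueRight v₁ v₂ y.1 = .inr y := dif_neg y.2

lemma glueRight_eq_inl_iff {y : V₂} {a : V₁} : glueRight v₁ v₂ y = .inl a ↔ y = v₂ ∧ v₁ = a := by
  unfold glueRight
  split_ifs with h <;> simp [h]

lemma glueRight_injective : Function.Injective (glueRight v₁ v₂) := by
  intro x y h
  unfold glueRight at h
  split_ifs at h with hx hy hy <;> simp_all

lemma inl_mem_map_glueRight_iff {e : Sym2 V₂} : .inl v₁ ∈ e.map (glueRight v₁ v₂) ↔ v₂ ∈ e := by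
  rw [← glueRight_self (v₂ := v₂), Sym2.apply_mem_map_iff glueRight_injective]

lemma mem_map_inl_and_mem_map_glueRight {w : V₁ ⊕ {y : V₂ // y ≠ v₂}} {e₁ : Sym2 V₁}
    {e₂ : Sym2 V₂} (h₁ : w ∈ e₁.map Sum.inl) (h₂ : w ∈ e₂.map (glueRight v₁ v₂)) :
    w = .inl v₁ ∧ v₁ ∈ e₁ ∧ v₂ ∈ e₂ := by
  obtain ⟨a, ha, rfl⟩ := Sym2.mem_map.1 h₁
  obtain ⟨y, hy, hya⟩ := Sym2.mem_map.1 h₂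
  obtain ⟨rfl, rfl⟩ := glueRight_eq_inl_iff.1 hya
  exact ⟨rfl, ha, hy⟩

lemma isDiag_of_map_inl_eq_map_glueRight {e₁ : Sym2 V₁} {e₂ : Sym2 V₂}
    (h : e₁.map Sum.inl = e₂.map (glueRight v₁ v₂)) : e₁.IsDiag ∧ e₂.IsDiag := by
  have he₂ : e₂.IsDiag := by
    have hv₂ : ∀ y ∈ e₂, y = v₂ := fun y hy => by
      have hy' : glueRight v₁ v₂ y ∈ e₂.map (glueRight v₁ v₂) := Sym2.mem_map.2 ⟨y, hy, rfl⟩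
      exact (glueRight_eq_inl_iff.1 (mem_map_inl_and_mem_map_glueRight (h ▸ hy') hy').1).1
    induction e₂ using Sym2.ind with
    | _ x y => exact Sym2.mk_isDiag_iff.2 ((hv₂ x (Sym2.mem_mk_left x y)).trans
        (hv₂ y (Sym2.mem_mk_right x y)).symm)
  refine ⟨?_, he₂⟩
  rwa [← Sym2.isDiag_map Sum.inl_injective, h, Sym2.isDiag_map glueRight_injective]

lemma map_glueRight_mem_edgeSet_glueAt {e : Sym2 V₂} :
    e.map (glueRight v₁ v₂) ∈ (glueAt H₁ H₂ v₁ v₂).edgeSet ↔ e ∈ H₂.edgeSet := by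
  induction e using Sym2.ind with
  | _ x y =>
    simp only [Sym2.map_mk, mem_edgeSet]
    unfold glueRight
    split_ifs with hx hy hy <;> subst_vars <;> simp [glueAt, H₂.adj_comm]

lemma exists_map_eq_of_mem_edgeSet_glueAt {e : Sym2 (V₁ ⊕ {y : V₂ // y ≠ v₂})}
    (he : e ∈ (glueAt H₁ H₂ v₁ v₂).edgeSet) :
    (∃ e₁ : Sym2 V₁, e₁.map Sum.inl = e) ∨ ∃ e₂ : Sym2 V₂, e₂.map (glueRight v₁ v₂) = e := by
  induction e using Sym2.ind with
  | _ w₁ w₂ =>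
    rcases w₁ with a | x <;> rcases w₂ with b | y
    · exact .inl ⟨s(a, b), rfl⟩
    · obtain ⟨rfl, -⟩ := he
      exact .inr ⟨s(v₂, y.1), by simp [glueRight_coe]⟩
    · obtain ⟨rfl, -⟩ := he
      exact .inr ⟨s(x.1, v₂), by simp [glueRight_coe]⟩
    · exact .inr ⟨s(x.1, y.1), by simp [glueRight_coe]⟩

variable (v₁) in
noncomputable def rightPart (M : Finset (Sym2 (V₁ ⊕ {y : V₂ // y ≠ v₂}))) : Finset (Sym2 V₂) :=
  M.preimage (Sym2.map (glueRight v₁ v₂)) (Sym2.map.injective glueRight_injective).injOn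

@[simp] lemma mem_rightPart {e : Sym2 V₂} : e ∈ rightPart v₁ M ↔ e.map (glueRight v₁ v₂) ∈ M :=
  Finset.mem_preimage

lemma isMatchingSet_rightPart (hM : IsMatchingSet (glueAt H₁ H₂ v₁ v₂) M) :
    IsMatchingSet H₂ (rightPart v₁ M) := by
  refine ⟨fun e he => map_glueRight_mem_edgeSet_glueAt.1 (hM.1 (mem_rightPart.1 he)), ?_⟩
  intro e he f hf hef y hye hyf
  exact hM.2 _ (mem_rightPart.1 he) _ (mem_rightPart.1 hf)
    ((Sym2.map.injective glueRight_injective).ne hef) (glueRight v₁ v₂ y)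
    ((Sym2.apply_mem_map_iff glueRight_injective).2 hye)
    ((Sym2.apply_mem_map_iff glueRight_injective).2 hyf)

variable [DecidableEq V₁]

variable (v₁ v₂) in
def glueParts (M₁ : Finset (Sym2 V₁)) (M₂ : Finset (Sym2 V₂)) :
    Finset (Sym2 (V₁ ⊕ {y : V₂ // y ≠ v₂})) :=
  M₁.image (Sym2.map Sum.inl) ∪ M₂.image (Sym2.map (glueRight v₁ v₂))

lemma leftPart_symmDiff : leftPart (M ∆ N) = leftPart M ∆ leftPart N := by
  ext; simp [Finset.mem_symmDiff]

lemma rightPart_symmDiff : rightPart v₁ (M ∆ N) = rightPart v₁ M ∆ rightPart v₁ N := by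
  ext; simp [Finset.mem_symmDiff]

lemma glueParts_leftPart_rightPart (hM : ↑M ⊆ (glueAt H₁ H₂ v₁ v₂).edgeSet) :
    glueParts v₁ v₂ (leftPart M) (rightPart v₁ M) = M := by
  ext e
  simp only [glueParts, Finset.mem_union, Finset.mem_image, mem_leftPart, mem_rightPart]
  refine ⟨by rintro (⟨e₁, he₁, rfl⟩ | ⟨e₂, he₂, rfl⟩) <;> assumption, fun he => ?_⟩
  rcases exists_map_eq_of_mem_edgeSet_glueAt (hM he) with ⟨e₁, rfl⟩ | ⟨e₂, rfl⟩
  · exact .inl ⟨e₁, he, rfl⟩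
  · exact .inr ⟨e₂, he, rfl⟩

lemma leftPart_glueParts (h₂ : ∀ e ∈ M₂, ¬ e.IsDiag) : leftPart (glueParts v₁ v₂ M₁ M₂) = M₁ := by
  ext e
  simp only [mem_leftPart, glueParts, Finset.mem_union, Finset.mem_image,
    (Sym2.map.injective Sum.inl_injective).eq_iff, exists_eq_right]
  refine ⟨?_, .inl⟩
  rintro (he | ⟨e₂, he₂, heq⟩)
  · exact he
  · exact absurd (isDiag_of_map_inl_eq_map_glueRight heq.symm).2 (h₂ e₂ he₂)

lemma rightPart_glueParts (h₁ : ∀ e ∈ M₁, ¬ e.IsDiag) :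
    rightPart v₁ (glueParts v₁ v₂ M₁ M₂) = M₂ := by
  ext e
  simp only [mem_rightPart, glueParts, Finset.mem_union, Finset.mem_image,
    (Sym2.map.injective glueRight_injective).eq_iff, exists_eq_right]
  refine ⟨?_, .inr⟩
  rintro (⟨e₁, he₁, heq⟩ | he)
  · exact absurd (isDiag_of_map_inl_eq_map_glueRight heq).1 (h₁ e₁ he₁)
  · exact he

lemma card_glueParts (h₂ : ∀ e ∈ M₂, ¬ e.IsDiag) :
    (glueParts v₁ v₂ M₁ M₂).card = M₁.card + M₂.card := by
  have hdisj : Disjoint (M₁.image (Sym2.map Sum.inl)) (M₂.image (Sym2.map (glueRight v₁ v₂))) := by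
    simp only [Finset.disjoint_left, Finset.mem_image]
    rintro _ ⟨e₁, -, rfl⟩ ⟨e₂, he₂, heq⟩
    exact h₂ e₂ he₂ (isDiag_of_map_inl_eq_map_glueRight heq.symm).2
  rw [glueParts, Finset.card_union_of_disjoint hdisj,
    Finset.card_image_of_injective _ (Sym2.map.injective Sum.inl_injective),
    Finset.card_image_of_injective _ (Sym2.map.injective glueRight_injective)]

lemma isMatchingSet_glueParts (h₁ : IsMatchingSet H₁ M₁) (h₂ : IsMatchingSet H₂ M₂)
    (hv : (∀ e ∈ M₁, v₁ ∉ e) ∨ ∀ e ∈ M₂, v₂ ∉ e) :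
    IsMatchingSet (glueAt H₁ H₂ v₁ v₂) (glueParts v₁ v₂ M₁ M₂) := by
  have hcross : ∀ e₁ ∈ M₁, ∀ e₂ ∈ M₂, ∀ w, w ∈ e₁.map Sum.inl → w ∉ e₂.map (glueRight v₁ v₂) :=
    fun e₁ he₁ e₂ he₂ w hw₁ hw₂ => by
      obtain ⟨-, hv₁, hv₂⟩ := mem_map_inl_and_mem_map_glueRight hw₁ hw₂
      exact hv.elim (fun h => h e₁ he₁ hv₁) (fun h => h e₂ he₂ hv₂)
  simp only [IsMatchingSet, glueParts, Finset.coe_union, Finset.coe_image, Set.union_subset_iff,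
    Set.image_subset_iff, Finset.mem_union, Finset.mem_image]
  refine ⟨⟨fun e he => map_inl_mem_edgeSet_glueAt.2 (h₁.1 he),
    fun e he => map_glueRight_mem_edgeSet_glueAt.2 (h₂.1 he)⟩, ?_⟩
  rintro _ (⟨e₁, he₁, rfl⟩ | ⟨e₂, he₂, rfl⟩) _ (⟨f₁, hf₁, rfl⟩ | ⟨f₂, hf₂, rfl⟩) hne w hwe hwf
  · obtain ⟨a, ha, rfl⟩ := Sym2.mem_map.1 hwe
    exact h₁.2 e₁ he₁ f₁ hf₁ (fun h => hne (h ▸ rfl)) a ha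
      ((Sym2.apply_mem_map_iff Sum.inl_injective).1 hwf)
  · exact hcross e₁ he₁ f₂ hf₂ w hwe hwf
  · exact hcross f₁ hf₁ e₂ he₂ w hwf hwe
  · obtain ⟨y, hy, rfl⟩ := Sym2.mem_map.1 hwe
    exact h₂.2 e₂ he₂ f₂ hf₂ (fun h => hne (h ▸ rfl)) y hy
      ((Sym2.apply_mem_map_iff glueRight_injective).1 hwf)

lemma IsMatchingSet.leftPart_or_rightPart_avoids (hM : IsMatchingSet (glueAt H₁ H₂ v₁ v₂) M) :
    (∀ e ∈ leftPart M, v₁ ∉ e) ∨ ∀ e ∈ rightPart v₁ M, v₂ ∉ e := by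
  by_contra! ⟨⟨e₁, he₁, hv₁⟩, ⟨e₂, he₂, hv₂⟩⟩
  have hne : e₁.map Sum.inl ≠ e₂.map (glueRight v₁ v₂) := fun h =>
    (isMatchingSet_rightPart hM).not_isDiag he₂ (isDiag_of_map_inl_eq_map_glueRight h).2
  exact hM.2 _ (mem_leftPart.1 he₁) _ (mem_rightPart.1 he₂) hne (.inl v₁)
    ((Sym2.apply_mem_map_iff Sum.inl_injective).2 hv₁) (inl_mem_map_glueRight_iff.2 hv₂)

lemma IsMatchingSet.card_leftPart_add_card_rightPart
    (hM : IsMatchingSet (glueAt H₁ H₂ v₁ v₂) M) :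
    (leftPart M).card + (rightPart v₁ M).card = M.card := by
  conv_rhs => rw [← glueParts_leftPart_rightPart hM.1]
  exact (card_glueParts fun _ => (isMatchingSet_rightPart hM).not_isDiag).symm

lemma eq_iff_leftPart_eq_and_rightPart_eq (hM : ↑M ⊆ (glueAt H₁ H₂ v₁ v₂).edgeSet)
    (hN : ↑N ⊆ (glueAt H₁ H₂ v₁ v₂).edgeSet) :
    M = N ↔ leftPart M = leftPart N ∧ rightPart v₁ M = rightPart v₁ N := by
  refine ⟨by rintro rfl; simp, fun ⟨h₁, h₂⟩ => ?_⟩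
  rw [← glueParts_leftPart_rightPart hM, ← glueParts_leftPart_rightPart hN, h₁, h₂]

lemma isStar_glueParts_iff {D₁ : Finset (Sym2 V₁)} {D₂ : Finset (Sym2 V₂)} (h₁ : D₁.Nonempty)
    (h₂ : D₂.Nonempty) :
    IsStar (glueParts v₁ v₂ D₁ D₂) ↔ (∀ e ∈ D₁, v₁ ∈ e) ∧ ∀ e ∈ D₂, v₂ ∈ e := by
  simp only [IsStar, glueParts, Finset.forall_mem_union, Finset.forall_mem_image]
  constructor
  · rintro ⟨w, hw₁, hw₂⟩
    obtain ⟨e₁, he₁⟩ := h₁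
    obtain ⟨e₂, he₂⟩ := h₂
    obtain ⟨rfl, -⟩ := mem_map_inl_and_mem_map_glueRight (hw₁ he₁) (hw₂ he₂)
    exact ⟨fun e he => (Sym2.apply_mem_map_iff Sum.inl_injective).1 (hw₁ he),
      fun e he => inl_mem_map_glueRight_iff.1 (hw₂ he)⟩
  · rintro ⟨hv₁, hv₂⟩
    exact ⟨.inl v₁, fun e he => (Sym2.apply_mem_map_iff Sum.inl_injective).2 (hv₁ e he),
      fun e he => inl_mem_map_glueRight_iff.2 (hv₂ e he)⟩

lemma ne_and_isStar_symmDiff_iff (hM : ↑M ⊆ (glueAt H₁ H₂ v₁ v₂).edgeSet)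
    (hN : ↑N ⊆ (glueAt H₁ H₂ v₁ v₂).edgeSet) :
    M ≠ N ∧ IsStar (M ∆ N) ↔
      (leftPart M ≠ leftPart N ∧ IsStar (leftPart M ∆ leftPart N)) ∧
          rightPart v₁ M = rightPart v₁ N ∨
        (rightPart v₁ M ≠ rightPart v₁ N ∧ IsStar (rightPart v₁ M ∆ rightPart v₁ N)) ∧
          leftPart M = leftPart N ∨
        leftPart M ≠ leftPart N ∧ rightPart v₁ M ≠ rightPart v₁ N ∧
          (∀ e ∈ leftPart M ∆ leftPart N, v₁ ∈ e) ∧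
          ∀ e ∈ rightPart v₁ M ∆ rightPart v₁ N, v₂ ∈ e := by
  have hMN : ↑(M ∆ N) ⊆ (glueAt H₁ H₂ v₁ v₂).edgeSet := fun e he =>
    (Finset.mem_symmDiff.1 he).elim (fun h => hM h.1) (fun h => hN h.1)
  rw [← glueParts_leftPart_rightPart hMN, leftPart_symmDiff, rightPart_symmDiff, Ne,
    eq_iff_leftPart_eq_and_rightPart_eq hM hN]
  have : Nonempty V₁ := ⟨v₁⟩
  have : Nonempty V₂ := ⟨v₂⟩
  by_cases h₁ : leftPart M = leftPart N <;> by_cases h₂ : rightPart v₁ M = rightPart v₁ N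
  · simp [h₁, h₂]
  · simp [h₁, h₂, glueParts, isStar_image_iff glueRight_injective]
  · simp [h₁, h₂, glueParts, isStar_image_iff Sum.inl_injective]
  · simp [h₁, h₂, isStar_glueParts_iff (Finset.symmDiff_nonempty.2 h₁)
      (Finset.symmDiff_nonempty.2 h₂)]

variable [Fintype V₁] [Fintype V₂] {k₁ k₂ : ℕ} {Mv₁ : Finset (Sym2 V₁)} {Mv₂ : Finset (Sym2 V₂)}

lemma card_leftPart_eq_and_card_rightPart_eq (hV₁ : Fintype.card V₁ = 2 * k₁ + 1)
    (hV₂ : Fintype.card V₂ = 2 * k₂ + 1) (hM : IsMatchingSet (glueAt H₁ H₂ v₁ v₂) M)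
    (hk : k₁ + k₂ ≤ M.card) : (leftPart M).card = k₁ ∧ (rightPart v₁ M).card = k₂ := by
  have := (isMatchingSet_leftPart hM).card_le hV₁
  have := (isMatchingSet_rightPart hM).card_le hV₂
  have := hM.card_leftPart_add_card_rightPart
  omega

lemma leftPart_eq_or_rightPart_eq (h₁ : IsUniquelyUnmatched H₁ k₁ v₁ Mv₁)
    (h₂ : IsUniquelyUnmatched H₂ k₂ v₂ Mv₂) (hM : IsMatchingSet (glueAt H₁ H₂ v₁ v₂) M)
    (hk : k₁ + k₂ ≤ M.card) : leftPart M = Mv₁ ∨ rightPart v₁ M = Mv₂ :=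
  have hcard := card_leftPart_eq_and_card_rightPart_eq h₁.card_eq h₂.card_eq hM hk
  hM.leftPart_or_rightPart_avoids.imp (h₁.eq_of_not_mem _ (isMatchingSet_leftPart hM) hcard.1)
    (h₂.eq_of_not_mem _ (isMatchingSet_rightPart hM) hcard.2)

lemma leftPart_eq_or_rightPart_eq_of_forall_mem_symmDiff (h₁ : IsUniquelyUnmatched H₁ k₁ v₁ Mv₁)
    (h₂ : IsUniquelyUnmatched H₂ k₂ v₂ Mv₂) (hM : IsMatchingSet (glueAt H₁ H₂ v₁ v₂) M)
    (hkM : k₁ + k₂ ≤ M.card) (hN : IsMatchingSet (glueAt H₁ H₂ v₁ v₂) N) (hkN : k₁ + k₂ ≤ N.card)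
    (hD₁ : ∀ e ∈ leftPart M ∆ leftPart N, v₁ ∈ e)
    (hD₂ : ∀ e ∈ rightPart v₁ M ∆ rightPart v₁ N, v₂ ∈ e) :
    leftPart M = leftPart N ∨ rightPart v₁ M = rightPart v₁ N := by
  obtain ⟨hM₁, hM₂⟩ := card_leftPart_eq_and_card_rightPart_eq h₁.card_eq h₂.card_eq hM hkM
  obtain ⟨hN₁, hN₂⟩ := card_leftPart_eq_and_card_rightPart_eq h₁.card_eq h₂.card_eq hN hkN
  rw [symmDiff_comm] at hD₁ hD₂
  refine (leftPart_eq_or_rightPart_eq h₁ h₂ hM hkM).imp (fun h => ?_) (fun h => ?_)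
  · exact (eq_of_forall_mem_symmDiff (h ▸ h₁.not_mem) (by omega) hD₁).symm
  · exact (eq_of_forall_mem_symmDiff (h ▸ h₂.not_mem) (by omega) hD₂).symm

noncomputable def splitNearPerfect (h₁ : IsUniquelyUnmatched H₁ k₁ v₁ Mv₁)
    (h₂ : IsUniquelyUnmatched H₂ k₂ v₂ Mv₂)
    (M : {M // IsMatchingSet (glueAt H₁ H₂ v₁ v₂) M ∧ k₁ + k₂ ≤ M.card}) :
    {p : {M // IsMatchingSet H₁ M ∧ k₁ ≤ M.card} × {M // IsMatchingSet H₂ M ∧ k₂ ≤ M.card} //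
      p.1 = ⟨Mv₁, h₁.isMatchingSet, h₁.card_matching.ge⟩ ∨
        p.2 = ⟨Mv₂, h₂.isMatchingSet, h₂.card_matching.ge⟩} :=
  have hcard := card_leftPart_eq_and_card_rightPart_eq h₁.card_eq h₂.card_eq M.2.1 M.2.2
  ⟨(⟨leftPart M.1, isMatchingSet_leftPart M.2.1, hcard.1.ge⟩,
      ⟨rightPart v₁ M.1, isMatchingSet_rightPart M.2.1, hcard.2.ge⟩),
    by simpa only [Subtype.mk.injEq] using leftPart_eq_or_rightPart_eq h₁ h₂ M.2.1 M.2.2⟩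

lemma splitNearPerfect_bijective (h₁ : IsUniquelyUnmatched H₁ k₁ v₁ Mv₁)
    (h₂ : IsUniquelyUnmatched H₂ k₂ v₂ Mv₂) : Function.Bijective (splitNearPerfect h₁ h₂) := by
  refine ⟨fun M N h => ?_, fun ⟨⟨M₁, M₂⟩, hp⟩ => ?_⟩
  · simp only [splitNearPerfect, Subtype.mk.injEq, Prod.mk.injEq] at h
    exact Subtype.ext ((eq_iff_leftPart_eq_and_rightPart_eq M.2.1.1 N.2.1.1).2 h)
  have hv : (∀ e ∈ M₁.1, v₁ ∉ e) ∨ ∀ e ∈ M₂.1, v₂ ∉ e := by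
    rcases hp with rfl | rfl
    exacts [.inl h₁.not_mem, .inr h₂.not_mem]
  have hnd₁ : ∀ e ∈ M₁.1, ¬ e.IsDiag := fun _ => M₁.2.1.not_isDiag
  have hnd₂ : ∀ e ∈ M₂.1, ¬ e.IsDiag := fun _ => M₂.2.1.not_isDiag
  refine ⟨⟨glueParts v₁ v₂ M₁.1 M₂.1, isMatchingSet_glueParts M₁.2.1 M₂.2.1 hv, ?_⟩, ?_⟩
  · rw [card_glueParts hnd₂]
    exact add_le_add M₁.2.2 M₂.2.2
  · simp only [splitNearPerfect, leftPart_glueParts hnd₂, rightPart_glueParts hnd₁]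

noncomputable def matchingGraphGlueAtIso (h₁ : IsUniquelyUnmatched H₁ k₁ v₁ Mv₁)
    (h₂ : IsUniquelyUnmatched H₂ k₂ v₂ Mv₂) :
    matchingGraph (glueAt H₁ H₂ v₁ v₂) (k₁ + k₂) ≃g
      (matchingGraph H₁ k₁ □ matchingGraph H₂ k₂).induce
        {p | p.1 = ⟨Mv₁, h₁.isMatchingSet, h₁.card_matching.ge⟩ ∨
          p.2 = ⟨Mv₂, h₂.isMatchingSet, h₂.card_matching.ge⟩} where
  toEquiv := Equiv.ofBijective _ (splitNearPerfect_bijective h₁ h₂)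
  map_rel_iff' {M N} := by
    simp only [Equiv.ofBijective_apply, induce_adj, boxProd_adj, matchingGraph_adj_iff,
      splitNearPerfect, ne_eq, Subtype.mk.injEq, ne_and_isStar_symmDiff_iff M.2.1.1 N.2.1.1]
    refine (or_assoc.symm.trans (or_iff_left ?_)).symm
    rintro ⟨hL, hR, hD₁, hD₂⟩
    exact (leftPart_eq_or_rightPart_eq_of_forall_mem_symmDiff h₁ h₂ M.2.1 M.2.2 N.2.1 N.2.2
      hD₁ hD₂).elim hL hR

end Glue

/-- **Gluing near-perfect matching graphs.** For `i = 1, 2`, let `Hᵢ` be a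
graph of odd order `2kᵢ + 1` with a uniquely unmatched vertex `vᵢ`, and let
`M_{vᵢ}` be the unique near-perfect matching of `Hᵢ` leaving `vᵢ` unmatched.
Then the near-perfect matching graph of `(H₁ ⊔ H₂)/(v₁ ∼ v₂)` is isomorphic to
`(M_{k₁}(H₁) ⊔ M_{k₂}(H₂))/(M_{v₁} ∼ M_{v₂})`. -/
theorem glue_nearPerfect_matchingGraph
    {V₁ V₂ : Type*} [Fintype V₁] [DecidableEq V₁] [Fintype V₂] [DecidableEq V₂]
    (H₁ : SimpleGraph V₁) (H₂ : SimpleGraph V₂) (v₁ : V₁) (v₂ : V₂) (k₁ k₂ : ℕ)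
    (hV₁ : Fintype.card V₁ = 2 * k₁ + 1) (hV₂ : Fintype.card V₂ = 2 * k₂ + 1)
    (Mv₁ : Finset (Sym2 V₁)) (hMv₁ : IsMatchingSet H₁ Mv₁) (hc₁ : Mv₁.card = k₁)
    (hun₁ : ∀ e ∈ Mv₁, v₁ ∉ e)
    (huniq₁ : ∀ M : Finset (Sym2 V₁), IsMatchingSet H₁ M → M.card = k₁ →
      (∀ e ∈ M, v₁ ∉ e) → M = Mv₁)
    (Mv₂ : Finset (Sym2 V₂)) (hMv₂ : IsMatchingSet H₂ Mv₂) (hc₂ : Mv₂.card = k₂)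
    (hun₂ : ∀ e ∈ Mv₂, v₂ ∉ e)
    (huniq₂ : ∀ M : Finset (Sym2 V₂), IsMatchingSet H₂ M → M.card = k₂ →
      (∀ e ∈ M, v₂ ∉ e) → M = Mv₂) :
    Nonempty
      (matchingGraph (glueAt H₁ H₂ v₁ v₂) (k₁ + k₂) ≃g
        glueAt (matchingGraph H₁ k₁) (matchingGraph H₂ k₂)
          ⟨Mv₁, hMv₁, hc₁.ge⟩ ⟨Mv₂, hMv₂, hc₂.ge⟩) :=
  ⟨(matchingGraphGlueAtIso ⟨hV₁, hMv₁, hc₁, hun₁, huniq₁⟩ ⟨hV₂, hMv₂, hc₂, hun₂, huniq₂⟩).trans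
    (glueAtIsoInduceBoxProd _ _ _ _).symm⟩
end
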